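/- arXiv:1308.6399 — 8 statements merged into one kernel-verified Lean document; each statement's English description precedes it below -/
import Mathlib

section
/- Let D be a distributive upper semilattice with least element 0 and greatest element 1, and let b, y₀, …, yₙ ∈ D. If b ⊔ yᵢ = 1 for each i ≤ n, then there exists t ∈ D such that b ⊔ t = 1 and t ≤ yᵢ for each i ≤ n. -/
/-- In a distributive upper semilattice `D` with least element `⊥` and
greatest element `⊤`, if `b ⊔ y i = ⊤` for each `i ≤ n`, then there exists `t`
with `b ⊔ t = ⊤` and `t ≤ y i` for each `i ≤ n`. -/
theorem stmt1 {D : Type*} [SemilatticeSup D] [OrderBot D] [OrderTop D]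
    (hdist : ∀ x a b : D, x ≤ a ⊔ b → ∃ a₀ b₀ : D, a₀ ≤ a ∧ b₀ ≤ b ∧ x = a₀ ⊔ b₀)
    (n : ℕ) (b : D) (y : Fin (n + 1) → D)
    (h : ∀ i : Fin (n + 1), b ⊔ y i = ⊤) :
    ∃ t : D, b ⊔ t = ⊤ ∧ ∀ i : Fin (n + 1), t ≤ y i := by
  induction n with
  | zero =>
    exact ⟨y 0, h 0, fun i => by rw [Fin.eq_zero i]⟩
  | succ n ih =>
    obtain ⟨t, ht, hty⟩ := ih (fun i => y i.castSucc) (fun i => h i.castSucc)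
    have hle : t ≤ b ⊔ y (Fin.last (n + 1)) := (h _).symm ▸ le_top
    obtain ⟨a₀, b₀, ha₀, hb₀, heq⟩ := hdist t b (y (Fin.last (n + 1))) hle
    refine ⟨b₀, ?_, fun i => ?_⟩
    · have : b ⊔ t = b ⊔ b₀ := by
        rw [heq, ← sup_assoc, sup_eq_left.mpr ha₀]
      rw [← this, ht]
    · induction i using Fin.lastCases with
      | last => exact hb₀
      | cast j => exact le_trans (heq ▸ le_sup_right : b₀ ≤ t) (hty j)
end

section
/- Let D be a distributive upper semilattice with least element 0 and greatest element 1, and let d₀, …, dₙ, x ∈ D. Then x is an upper bound of the set {y ∈ D : y ≤ dᵢ for all i ≤ n} if and only if x is the greatest lower bound of the finite set {x ⊔ dᵢ : i ≤ n}. -/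
/-!
One direction is immediate: if `x` is the meet of the `x ⊔ dᵢ`, any common lower bound `y` of the
`dᵢ` lies below every `x ⊔ dᵢ`, hence below `x`. Conversely, distributivity lets one peel the
`dᵢ` off a lower bound `y` of all `x ⊔ dᵢ` one at a time: `y ≤ x ⊔ dᵢ` splits `y` as `a ⊔ b` with
`a ≤ x` and `b ≤ dᵢ`, and iterating over the finitely many `i` leaves `y ≤ x ⊔ b` with `b` a
common lower bound of the `dᵢ`, so `b ≤ x` and `y ≤ x`.
-/

section DistribSup

variable {D ι : Type*} [SemilatticeSup D]

theorem exists_forall_le_and_le_sup_of_forall_le_sup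
    (hdist : ∀ x a b : D, x ≤ a ⊔ b → ∃ a₀ b₀ : D, a₀ ≤ a ∧ b₀ ≤ b ∧ x = a₀ ⊔ b₀)
    (d : ι → D) (x : D) (s : Finset ι) :
    ∀ y : D, (∀ i ∈ s, y ≤ x ⊔ d i) → ∃ b ≤ y, (∀ i ∈ s, b ≤ d i) ∧ y ≤ x ⊔ b := by
  induction s using Finset.cons_induction with
  | empty => exact fun y _ => ⟨y, le_rfl, by simp, le_sup_right⟩
  | cons i s _ ih =>
    intro y hy
    obtain ⟨a, b, hax, hbd, rfl⟩ := hdist y x (d i) (hy i (Finset.mem_cons_self i s))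
    obtain ⟨c, hcb, hcd, hbc⟩ :=
      ih b fun j hj => le_sup_right.trans (hy j (Finset.mem_cons_of_mem hj))
    refine ⟨c, hcb.trans le_sup_right, ?_, ?_⟩
    · simpa only [Finset.forall_mem_cons] using ⟨hcb.trans hbd, hcd⟩
    · exact sup_le (hax.trans le_sup_left) hbc

theorem forall_le_imp_le_iff_isGLB_range_sup [Fintype ι]
    (hdist : ∀ x a b : D, x ≤ a ⊔ b → ∃ a₀ b₀ : D, a₀ ≤ a ∧ b₀ ≤ b ∧ x = a₀ ⊔ b₀)
    (d : ι → D) (x : D) :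
    (∀ y : D, (∀ i, y ≤ d i) → y ≤ x) ↔ IsGLB (Set.range fun i => x ⊔ d i) x := by
  have hx_lower : x ∈ lowerBounds (Set.range fun i => x ⊔ d i) := by
    rintro _ ⟨i, rfl⟩
    exact le_sup_left
  constructor
  · refine fun h => ⟨hx_lower, fun y hy => ?_⟩
    obtain ⟨b, -, hbd, hyb⟩ :=
      exists_forall_le_and_le_sup_of_forall_le_sup hdist d x Finset.univ y
        fun i _ => hy ⟨i, rfl⟩
    exact hyb.trans (sup_le le_rfl (h b fun i => hbd i (Finset.mem_univ i)))
  · intro h y hy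
    exact h.2 <| by
      rintro _ ⟨i, rfl⟩
      exact (hy i).trans le_sup_right

end DistribSup

theorem stmt2_general {D : Type*} [SemilatticeSup D]
    (hdist : ∀ x a b : D, x ≤ a ⊔ b → ∃ a₀ b₀ : D, a₀ ≤ a ∧ b₀ ≤ b ∧ x = a₀ ⊔ b₀)
    (n : ℕ) (d : Fin (n + 1) → D) (x : D) :
    (∀ y : D, (∀ i : Fin (n + 1), y ≤ d i) → y ≤ x) ↔
      IsGLB (Set.range fun i : Fin (n + 1) => x ⊔ d i) x :=
  forall_le_imp_le_iff_isGLB_range_sup hdist d x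

/-- In a distributive upper semilattice `D` with least element `⊥` and
greatest element `⊤`, `x` is an upper bound of `{y | ∀ i, y ≤ d i}` if and only if
`x` is the greatest lower bound of the finite set `{x ⊔ d i : i ≤ n}`. -/
theorem stmt2 {D : Type*} [SemilatticeSup D] [OrderBot D] [OrderTop D]
    (hdist : ∀ x a b : D, x ≤ a ⊔ b → ∃ a₀ b₀ : D, a₀ ≤ a ∧ b₀ ≤ b ∧ x = a₀ ⊔ b₀)
    (n : ℕ) (d : Fin (n + 1) → D) (x : D) :
    (∀ y : D, (∀ i : Fin (n + 1), y ≤ d i) → y ≤ x) ↔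
      IsGLB (Set.range fun i : Fin (n + 1) => x ⊔ d i) x :=
  stmt2_general hdist n d x
end

section
/- Let D be a distributive upper semilattice with least element 0 and greatest element 1. Let p₀, …, pₙ ∈ D be such that nd[pᵢ, 1] holds for each i ≤ n and pᵢ ⊔ pⱼ = 1 for all i ≠ j. Let E be the set of all upper bounds of {y ∈ D : y ≤ pᵢ for all i ≤ n}. Then {p₀, …, pₙ} is exactly the set of minimal elements of {x ∈ E : nd[x, 1]}. -/
/-- `Nd x y` : `x < y` and the interval `[x, y]` does not embed the 4-element boolean
algebra preserving least and greatest element. -/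
def Nd {D : Type*} [SemilatticeSup D] (x y : D) : Prop :=
  x < y ∧ ¬ ∃ a b : D, x ≤ a ∧ a ≤ y ∧ x ≤ b ∧ b ≤ y ∧ a ⊔ b = y ∧ a ≠ y ∧ b ≠ y ∧
    (∀ z : D, z ≤ a → z ≤ b → z ≤ x)

/-- Auxiliary: if `x ⊔ p m = ⊤` for all `m ∈ s`, then there is a single `f` lying below
all `p m` for `m ∈ s` with `x ⊔ f = ⊤`. -/
lemma stmt3_build {D : Type*} [SemilatticeSup D] [OrderTop D]
    (hdist : ∀ x a b : D, x ≤ a ⊔ b → ∃ a₀ b₀ : D, a₀ ≤ a ∧ b₀ ≤ b ∧ x = a₀ ⊔ b₀)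
    {ι : Type*} [DecidableEq ι] (p : ι → D) (x : D) (s : Finset ι)
    (hs : ∀ m ∈ s, x ⊔ p m = ⊤) :
    ∃ f : D, (∀ m ∈ s, f ≤ p m) ∧ x ⊔ f = ⊤ := by
  induction s using Finset.induction_on with
  | empty => exact ⟨⊤, by simp, by simp⟩
  | @insert m' s hm ih =>
    obtain ⟨f, hf, hxf⟩ := ih fun m hmem => hs m (Finset.mem_insert_of_mem hmem)
    obtain ⟨e, f', he, hf', hdec⟩ := hdist (p m') x f (by rw [hxf]; exact le_top)
    have hjoin : x ⊔ f' = ⊤ := by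
      have h1 : x ⊔ p m' = ⊤ := hs m' (Finset.mem_insert_self _ _)
      rw [hdec, ← sup_assoc, sup_eq_left.mpr he] at h1
      exact h1
    refine ⟨f', fun m hmem => ?_, hjoin⟩
    rcases Finset.mem_insert.mp hmem with h | h
    · subst h; rw [hdec]; exact le_sup_right
    · exact hf'.trans (hf m h)

/-- In a distributive upper semilattice `D` with least and greatest
elements, if `nd[p i, ⊤]` holds for each `i ≤ n` and `p i ⊔ p j = ⊤` for `i ≠ j`,
and `E` is the set of all upper bounds of `{y | ∀ i, y ≤ p i}`, then
`{p 0, …, p n}` is exactly the set of minimal elements of `{x ∈ E | nd[x, ⊤]}`. -/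
theorem stmt3 {D : Type*} [SemilatticeSup D] [OrderBot D] [OrderTop D]
    (hdist : ∀ x a b : D, x ≤ a ⊔ b → ∃ a₀ b₀ : D, a₀ ≤ a ∧ b₀ ≤ b ∧ x = a₀ ⊔ b₀)
    (n : ℕ) (p : Fin (n + 1) → D)
    (hnd : ∀ i : Fin (n + 1), Nd (p i) ⊤)
    (hjoin : ∀ i j : Fin (n + 1), i ≠ j → p i ⊔ p j = ⊤) :
    (Set.range p) =
      { x : D | (x ∈ {x : D | ∀ y : D, (∀ i : Fin (n + 1), y ≤ p i) → y ≤ x} ∧ Nd x ⊤) ∧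
        ∀ y : D, (y ∈ {x : D | ∀ z : D, (∀ i : Fin (n + 1), z ≤ p i) → z ≤ x} ∧ Nd y ⊤) →
          y ≤ x → y = x } := by
  classical
  -- construction of q i : below all p k for k ≠ i, with p i ⊔ q i = ⊤
  have hQ : ∀ i : Fin (n + 1), ∃ q : D, (∀ k, k ≠ i → q ≤ p k) ∧ p i ⊔ q = ⊤ := by
    intro i
    obtain ⟨q, hq1, hq2⟩ := stmt3_build hdist p (p i) (Finset.univ.erase i)
      (fun m hm => hjoin i m (Ne.symm (Finset.mem_erase.mp hm).1))
    exact ⟨q, fun k hk => hq1 k (Finset.mem_erase.mpr ⟨hk, Finset.mem_univ k⟩), hq2⟩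
  ext x
  simp only [Set.mem_range, Set.mem_setOf_eq]
  constructor
  · rintro ⟨i, rfl⟩
    refine ⟨⟨fun y hy => hy i, hnd i⟩, ?_⟩
    rintro y ⟨hyE, hyNd⟩ hyle
    by_contra hne
    have hylt : y < p i := lt_of_le_of_ne hyle hne
    obtain ⟨q, hq1, hq2⟩ := hQ i
    apply hyNd.2
    refine ⟨p i, y ⊔ q, hyle, le_top, le_sup_left, le_top, ?_, (hnd i).1.ne, ?_, ?_⟩
    · -- p i ⊔ (y ⊔ q) = ⊤
      rw [← sup_assoc, sup_eq_left.mpr hyle]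
      exact hq2
    · -- y ⊔ q ≠ ⊤
      intro htop
      obtain ⟨c, d, hc, hd, hdec⟩ := hdist (p i) y q (by rw [htop]; exact le_top)
      have hdy : d ≤ y := by
        refine hyE d fun k => ?_
        by_cases hk : k = i
        · subst hk; rw [hdec]; exact le_sup_right
        · exact hd.trans (hq1 k hk)
      exact hylt.not_ge (by rw [hdec]; exact sup_le hc hdy)
    · -- common lower bounds of p i and y ⊔ q lie below y
      intro z hz1 hz2
      obtain ⟨z₁, z₂, h1, h2, hzd⟩ := hdist z y q hz2
      have hz₂y : z₂ ≤ y := by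
        refine hyE z₂ fun k => ?_
        by_cases hk : k = i
        · subst hk; exact le_trans (by rw [hzd]; exact le_sup_right) hz1
        · exact h2.trans (hq1 k hk)
      rw [hzd]; exact sup_le h1 hz₂y
  · rintro ⟨⟨hxE, hxNd⟩, hmin⟩
    have hclaim : ∃ i, p i ≤ x := by
      by_contra hno
      push_neg at hno
      -- Step 1: x ⊔ p i = ⊤ for every i
      have hstep : ∀ i, x ⊔ p i = ⊤ := by
        intro i
        obtain ⟨q, hq1, hq2⟩ := hQ i
        by_contra hne
        apply hxNd.2
        refine ⟨x ⊔ p i, x ⊔ q, le_sup_left, le_top, le_sup_left, le_top, ?_, hne, ?_, ?_⟩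
        · rw [sup_sup_sup_comm, sup_idem, hq2, sup_top_eq]
        · -- x ⊔ q ≠ ⊤
          intro htop
          obtain ⟨c, d, hc, hd, hdec⟩ := hdist (p i) x q (by rw [htop]; exact le_top)
          have hdx : d ≤ x := by
            refine hxE d fun k => ?_
            by_cases hk : k = i
            · subst hk; rw [hdec]; exact le_sup_right
            · exact hd.trans (hq1 k hk)
          exact hno i (by rw [hdec]; exact sup_le hc hdx)
        · -- common lower bounds of x ⊔ p i and x ⊔ q lie below x
          intro z hz1 hz2
          obtain ⟨z₁, z₂, h1, h2, hzd⟩ := hdist z x (p i) hz1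
          obtain ⟨w₁, w₂, g1, g2, hwd⟩ := hdist z₂ x q
            (le_trans (by rw [hzd]; exact le_sup_right) hz2)
          have hw₂ : w₂ ≤ x := by
            refine hxE w₂ fun k => ?_
            by_cases hk : k = i
            · subst hk; exact le_trans (by rw [hwd]; exact le_sup_right) h2
            · exact g2.trans (hq1 k hk)
          rw [hzd, hwd]
          exact sup_le h1 (sup_le g1 hw₂)
      -- Step 2: build f below all p m with x ⊔ f = ⊤, then f ≤ x forces x = ⊤
      obtain ⟨f, hf1, hf2⟩ := stmt3_build hdist p x Finset.univ fun m _ => hstep m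
      have hfx : f ≤ x := hxE f fun k => hf1 k (Finset.mem_univ k)
      have hxt : x = ⊤ := by rw [← hf2, sup_eq_left.mpr hfx]
      exact hxNd.1.ne hxt
    obtain ⟨i, hi⟩ := hclaim
    exact ⟨i, hmin (p i) ⟨fun y hy => hy i, hnd i⟩ hi⟩
end

section
/- Let D be a distributive upper semilattice with least element 0 and greatest element 1. Let (aᵢ)_{i∈ι} be a finite or countably infinite family of elements of D such that nd[0, aᵢ] holds for each i ∈ ι and, for all i ≠ j, every common lower bound of aᵢ and aⱼ equals 0. Let I = {x ∈ D : there is a finite F ⊆ ι with x ≤ ⊔_{i∈F} aᵢ} be the ideal of D generated by {aᵢ : i ∈ ι}. Then {aᵢ : i ∈ ι} is exactly the set of maximal elements of {x ∈ I : nd[0, x]}. -/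
/-- If `z` is below `a i` and below the sup of the `a j` over a finite set not
containing `i`, then `z = ⊥`. -/
lemma aux_disj {D : Type*} [SemilatticeSup D] [OrderBot D]
    (hdist : ∀ x a b : D, x ≤ a ⊔ b → ∃ a₀ b₀ : D, a₀ ≤ a ∧ b₀ ≤ b ∧ x = a₀ ⊔ b₀)
    {ι : Type*} (a : ι → D)
    (hdisj : ∀ i j : ι, i ≠ j → ∀ z : D, z ≤ a i → z ≤ a j → z = ⊥)
    (F : Finset ι) : ∀ i ∉ F, ∀ z : D, z ≤ a i → z ≤ F.sup a → z = ⊥ := by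
  induction F using Finset.cons_induction with
  | empty => intro i _ z _ hz; simpa using hz
  | cons j F' hj ih =>
    intro i hi z hzi hzF
    rw [Finset.sup_cons] at hzF
    obtain ⟨z₁, z₂, hz₁, hz₂, hz⟩ := hdist z (a j) (F'.sup a) hzF
    have hij : i ≠ j := by rintro rfl; exact hi (Finset.mem_cons_self i F')
    have h1 : z₁ = ⊥ := hdisj j i (Ne.symm hij) z₁ hz₁ (le_trans (hz ▸ le_sup_left) hzi)
    have : z = z₂ := by rw [hz, h1, bot_sup_eq]
    exact ih i (fun h => hi (Finset.mem_cons_of_mem h)) z hzi (this ▸ hz₂)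

/-- Any `Nd ⊥ x` element below a finite sup of the `a i` is below some `a i`. -/
lemma aux_below {D : Type*} [SemilatticeSup D] [OrderBot D]
    (hdist : ∀ x a b : D, x ≤ a ⊔ b → ∃ a₀ b₀ : D, a₀ ≤ a ∧ b₀ ≤ b ∧ x = a₀ ⊔ b₀)
    {ι : Type*} (a : ι → D)
    (hdisj : ∀ i j : ι, i ≠ j → ∀ z : D, z ≤ a i → z ≤ a j → z = ⊥)
    (F : Finset ι) : ∀ x : D, Nd (⊥ : D) x → x ≤ F.sup a → ∃ i ∈ F, x ≤ a i := by
  induction F using Finset.cons_induction with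
  | empty =>
    intro x hx hle
    simp only [Finset.sup_empty, le_bot_iff] at hle
    exact absurd hle.symm (ne_of_lt hx.1)
  | cons j F' hj ih =>
    intro x hx hle
    rw [Finset.sup_cons] at hle
    obtain ⟨a₀, b₀, ha₀, hb₀, hxe⟩ := hdist x (a j) (F'.sup a) hle
    by_cases hax : a₀ = x
    · exact ⟨j, Finset.mem_cons_self j F', hax ▸ ha₀⟩
    by_cases hbx : b₀ = x
    · obtain ⟨i, hiF, hi⟩ := ih x hx (hbx ▸ hb₀)
      exact ⟨i, Finset.mem_cons_of_mem hiF, hi⟩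
    exfalso
    exact hx.2 ⟨a₀, b₀, bot_le, hxe ▸ le_sup_left, bot_le, hxe ▸ le_sup_right,
      hxe.symm, hax, hbx, fun z hza hzb => le_bot_iff.mpr
        (aux_disj hdist a hdisj F' j hj z (le_trans hza ha₀)
          (le_trans hzb hb₀))⟩

/-- In a distributive upper semilattice `D` with least and greatest
elements, let `(a i)_{i ∈ ι}` be a finite or countably infinite family such that
`nd[⊥, a i]` for each `i` and, for `i ≠ j`, every common lower bound of `a i` and
`a j` is `⊥`.  If `I` is the ideal generated by the `a i`, then `{a i : i ∈ ι}` is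
exactly the set of maximal elements of `{x ∈ I | nd[⊥, x]}`. -/
theorem stmt4 {D : Type*} [SemilatticeSup D] [OrderBot D] [OrderTop D]
    (hdist : ∀ x a b : D, x ≤ a ⊔ b → ∃ a₀ b₀ : D, a₀ ≤ a ∧ b₀ ≤ b ∧ x = a₀ ⊔ b₀)
    {ι : Type*} [Countable ι] (a : ι → D)
    (hnd : ∀ i : ι, Nd (⊥ : D) (a i))
    (hdisj : ∀ i j : ι, i ≠ j → ∀ z : D, z ≤ a i → z ≤ a j → z = ⊥) :
    (Set.range a) =
      { x : D | (x ∈ {x : D | ∃ F : Finset ι, x ≤ F.sup a} ∧ Nd (⊥ : D) x) ∧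
        ∀ y : D, (y ∈ {x : D | ∃ F : Finset ι, x ≤ F.sup a} ∧ Nd (⊥ : D) y) →
          x ≤ y → x = y } := by
  ext x
  constructor
  · rintro ⟨i, rfl⟩
    refine ⟨⟨⟨{i}, by simp⟩, hnd i⟩, ?_⟩
    rintro y ⟨⟨F, hyF⟩, hndy⟩ hle
    obtain ⟨j, _, hyj⟩ := aux_below hdist a hdisj F y hndy hyF
    by_cases hij : i = j
    · exact le_antisymm hle (hij ▸ hyj)
    · exact absurd (hdisj i j hij (a i) le_rfl (le_trans hle hyj))
        (ne_of_gt (hnd i).1)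
  · rintro ⟨⟨⟨F, hxF⟩, hndx⟩, hmax⟩
    obtain ⟨i, _, hxi⟩ := aux_below hdist a hdisj F x hndx hxF
    exact ⟨i, (hmax (a i) ⟨⟨{i}, by simp⟩, hnd i⟩ hxi).symm⟩
end

section
/- Let A and B be c.e. subsets of ℕ with B ⊂ₛ A (B a small subset of A). Then every split Y ⊑ A with Y ⊆* B is computable. -/
/-!
Split `A = Y ⊔ Z`. Since `Y ⊆* B`, almost all of `A ∖ B` lies in `Z`, so smallness of `B`
(applied with `U = ℕ`, `V = Z`) makes `(ℕ ∖ A) ∪ Z` c.e.; but that set is the complement of `Y`.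
So `Y` and its complement are both c.e., and `Y` is computable by Post's theorem.
-/

/-- A set of natural numbers is computably enumerable if it is the domain of a
partial computable function. -/
def CE (A : Set ℕ) : Prop := ∃ f : ℕ →. ℕ, Partrec f ∧ A = f.Dom

/-- A set of natural numbers is computable if its membership predicate is computable. -/
def IsComputableSet (A : Set ℕ) : Prop := ComputablePred (· ∈ A)

/-- `X ⊆* Y` : `X ∖ Y` is finite. -/
def SubsetStar (X Y : Set ℕ) : Prop := (X \ Y).Finite

/-- `X ⊑ A` : `X` is a split of the c.e. set `A`, i.e. `X` is c.e. and there is a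
c.e. set `Y` with `X ∩ Y = ∅` and `X ∪ Y = A`. -/
def Split (A X : Set ℕ) : Prop := CE X ∧ ∃ Y : Set ℕ, CE Y ∧ X ∩ Y = ∅ ∧ X ∪ Y = A

/-- `B ⊂ₛ A` : `B` is a small subset of `A`. -/
def SmallSubset (B A : Set ℕ) : Prop :=
  B ⊆ A ∧ ∀ U V : Set ℕ, CE U → CE V → SubsetStar (U ∩ (A \ B)) V → CE ((U \ A) ∪ V)

/-- `B ⊂ₘ A` : `B` is a major subset of `A`. -/
def MajorSubset (B A : Set ℕ) : Prop :=
  B ⊆ A ∧ (A \ B).Infinite ∧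
    ∀ W : Set ℕ, CE W → A ∪ W = Set.univ → (Set.univ \ (B ∪ W)).Finite

lemma ce_iff_rePred (A : Set ℕ) : CE A ↔ REPred (· ∈ A) := by
  constructor
  · rintro ⟨f, hf, rfl⟩
    exact hf.dom_re
  · intro h
    refine ⟨fun a => (Part.assert (a ∈ A) fun _ => Part.some ()).map fun _ => 0,
      h.map ((Computable.const 0).comp Computable.fst).to₂, ?_⟩
    ext a
    simp [PFun.Dom, Part.assert]

lemma ce_univ : CE Set.univ :=
  ⟨fun _ => Part.some 0, (Computable.const 0).partrec, by ext; simp [PFun.Dom]⟩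

lemma isComputableSet_of_ce_of_ce_compl {Y : Set ℕ} (hY : CE Y) (hYc : CE Yᶜ) :
    IsComputableSet Y :=
  ComputablePred.computable_iff_re_compl_re'.mpr
    ⟨(ce_iff_rePred Y).mp hY, (ce_iff_rePred Yᶜ).mp hYc⟩

lemma SmallSubset.ce_compl_union {A B V : Set ℕ} (hsmall : SmallSubset B A) (hV : CE V)
    (hAB : SubsetStar (A \ B) V) : CE ((Set.univ \ A) ∪ V) :=
  hsmall.2 Set.univ V ce_univ hV (by rwa [SubsetStar, Set.univ_inter])

lemma subsetStar_diff_of_union_eq {A B Y Z : Set ℕ} (hunion : Y ∪ Z = A)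
    (hYB : SubsetStar Y B) : SubsetStar (A \ B) Z :=
  hYB.subset fun x ⟨⟨hxA, hxB⟩, hxZ⟩ =>
    ⟨(hunion ▸ hxA : x ∈ Y ∪ Z).resolve_right hxZ, hxB⟩

lemma Set.univ_diff_union_eq_compl_of_union_eq {α : Type*} {A Y Z : Set α}
    (hdisj : Y ∩ Z = ∅) (hunion : Y ∪ Z = A) : (Set.univ \ A) ∪ Z = Yᶜ := by
  subst hunion
  ext x
  have := Set.eq_empty_iff_forall_notMem.mp hdisj x
  simp only [Set.mem_union, Set.mem_sdiff, Set.mem_univ, true_and, Set.mem_compl_iff,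
    Set.mem_inter_iff] at this ⊢
  tauto

theorem stmt5_general (A B : Set ℕ) (hsmall : SmallSubset B A) :
    ∀ Y : Set ℕ, Split A Y → SubsetStar Y B → IsComputableSet Y := by
  rintro Y ⟨hY, Z, hZ, hdisj, hunion⟩ hYB
  have hYc : CE ((Set.univ \ A) ∪ Z) :=
    hsmall.ce_compl_union hZ (subsetStar_diff_of_union_eq hunion hYB)
  rw [Set.univ_diff_union_eq_compl_of_union_eq hdisj hunion] at hYc
  exact isComputableSet_of_ce_of_ce_compl hY hYc

/-- If `A`, `B` are c.e. with `B ⊂ₛ A`, then every split `Y ⊑ A` with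
`Y ⊆* B` is computable. -/
theorem stmt5 (A B : Set ℕ) (hA : CE A) (hB : CE B) (hsmall : SmallSubset B A) :
    ∀ Y : Set ℕ, Split A Y → SubsetStar Y B → IsComputableSet Y :=
  stmt5_general A B hsmall
end

section
/- If P ⊆ ℕ is a Σ⁰₂ set, then there is a computable function i ↦ Yᵢ assigning to each i ∈ ℕ a finite set Yᵢ ⊆ {0, …, i} (given by canonical indices) such that: (a) every b ∈ P belongs to Yᵢ for all but finitely many i, and (b) Yᵢ ⊆ P for infinitely many i. -/
open Filter

/-- A set `P ⊆ ℕ` is `Σ⁰₂` if there is a computable relation `R ⊆ ℕ³` such that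
`n ∈ P ↔ ∃ a ∀ b, R n a b`. -/
def Sigma02 (P : Set ℕ) : Prop :=
  ∃ R : ℕ → ℕ → ℕ → Prop,
    ComputablePred (fun t : ℕ × ℕ × ℕ => R t.1 t.2.1 t.2.2) ∧
    ∀ n : ℕ, n ∈ P ↔ ∃ a : ℕ, ∀ b : ℕ, R n a b

/-- A function assigning finite sets to numbers is computable if it is induced by a
computable function returning (codes of) lists. -/
def ComputableFinsetFun (Y : ℕ → Finset ℕ) : Prop :=
  ∃ f : ℕ → List ℕ, Computable f ∧ ∀ i : ℕ, (f i).toFinset = Y i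

/-!
Write `n ∈ P ↔ ∃ a, ∀ b, g ⟨n, a⟩ b` with `g` computable. At stage `s` a code `c = ⟨n, a⟩` is
alive if no `b ≤ s` refutes it; a refuted code dies at the single stage `max c b₀`, where `b₀` is
its least refutation, so the least code `m s` dying at stage `s` tends to infinity. Put `n ≤ s`
into `Y s` when `⟨n, a⟩ < m s` for the least `a` alive at stage `s`.

A true witness `a` for `n` keeps `n` in `Y s` as soon as `⟨n, a⟩ < m s`. Since `m → ∞`, there are
infinitely many non-deficiency stages `s`, i.e. `m s < m t` for all `t > s`; at such a stage a code
`c < m s` alive at `s` is never refuted, for otherwise it would die at a later stage `t` with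
`m t ≤ c`. Hence `Y s ⊆ P`.
-/

section BoundedSearch

/-- The least `k ≤ s` with `p k`, or `s + 1` if there is none. -/
def boundedFind (p : ℕ → Bool) (s : ℕ) : ℕ :=
  Nat.find (⟨s + 1, Or.inl s.lt_succ_self⟩ : ∃ k, s < k ∨ p k = true)

variable {p : ℕ → Bool} {s k : ℕ}

theorem boundedFind_le_succ : boundedFind p s ≤ s + 1 :=
  Nat.find_min' _ (Or.inl s.lt_succ_self)

theorem boundedFind_le (h : p k = true) : boundedFind p s ≤ k :=
  Nat.find_min' _ (Or.inr h)

theorem boundedFind_spec (h : boundedFind p s ≤ s) : p (boundedFind p s) = true :=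
  (Nat.find_spec (⟨s + 1, Or.inl s.lt_succ_self⟩ : ∃ k, s < k ∨ p k = true)).resolve_left
    (not_lt.2 h)

theorem eq_false_of_lt_boundedFind (h : k < boundedFind p s) : p k = false := by
  have hk := Nat.find_min _ h
  simpa using (not_or.1 hk).2

theorem boundedFind_eq (hk : p k = true) (hmin : ∀ j < k, p j = false) (hks : k ≤ s) :
    boundedFind p s = k := by
  refine le_antisymm (boundedFind_le hk) (not_lt.1 fun hlt => ?_)
  simpa [hmin _ hlt] using boundedFind_spec (hlt.le.trans hks)

theorem boundedFind_eq_boundedFind {t : ℕ} (hs : boundedFind p s ≤ s)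
    (ht : boundedFind p t ≤ t) : boundedFind p s = boundedFind p t :=
  le_antisymm (boundedFind_le (boundedFind_spec ht)) (boundedFind_le (boundedFind_spec hs))

theorem Computable₂.boundedFind {α : Type*} [Primcodable α] {p : α → ℕ → Bool}
    (hp : Computable₂ p) : Computable₂ fun a s => _root_.boundedFind (p a) s := by
  have hlt : Computable fun x : (α × ℕ) × ℕ => decide (x.1.2 < x.2) :=
    Primrec.nat_lt.decide.to_comp.comp (Computable.snd.comp Computable.fst) Computable.snd
  have hor : Computable fun x : (α × ℕ) × ℕ => decide (x.1.2 < x.2) || p x.1.1 x.2 :=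
    Primrec.or.to_comp.comp hlt (hp.comp (Computable.fst.comp Computable.fst) Computable.snd)
  have hdec : ComputablePred fun x : (α × ℕ) × ℕ => x.1.2 < x.2 ∨ p x.1.1 x.2 = true :=
    ComputablePred.computable_iff.2 ⟨_, hor, by funext x; simp⟩
  exact Computable.find hdec _

end BoundedSearch

theorem Computable₂.filter_range {α : Type*} [Primcodable α] {p : α → ℕ → Bool}
    (hp : Computable₂ p) : Computable₂ fun a n => (List.range n).filter (p a) := by
  open Computable in
  have hstep : Computable₂ fun (x : α × ℕ) (nl : ℕ × List ℕ) =>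
      nl.2 ++ cond (p x.1 nl.1) [nl.1] [] :=
    list_append.comp (snd.comp snd)
      (cond (hp.comp (fst.comp fst) (fst.comp snd))
        (list_cons.comp (fst.comp snd) (const [])) (const []))
  have hrec : Computable fun x : α × ℕ => (Nat.rec [] (fun n l => l ++ cond (p x.1 n) [n] [])
      x.2 : List ℕ) := nat_rec snd (const []) hstep
  refine hrec.of_eq fun x => ?_
  induction x.2 with
  | zero => rfl
  | succ n ih =>
    simp only [List.range_succ, List.filter_append, List.filter_singleton, ← ih]

theorem frequently_forall_lt_of_tendsto_atTop {β : Type*} [LinearOrder β] [NoMaxOrder β]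
    {u : ℕ → β} (hu : Tendsto u atTop atTop) : ∃ᶠ s in atTop, ∀ t, s < t → u s < u t := by
  rw [frequently_atTop]
  intro N
  obtain ⟨M, hM⟩ := eventually_atTop.1 (hu.eventually_gt_atTop (u N))
  have hNI : N ∈ Finset.Icc N (max N M) := by simp
  obtain ⟨m, hmI, hm⟩ := Finset.exists_min_image _ u ⟨N, hNI⟩
  obtain ⟨s, hs, hsmax⟩ := Finset.exists_max_image
    ((Finset.Icc N (max N M)).filter fun t => u t = u m) id ⟨m, by simp [hmI]⟩
  simp only [Finset.mem_filter, Finset.mem_Icc, id] at hs hsmax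
  refine ⟨s, hs.1.1, fun t hst => ?_⟩
  rw [hs.2]
  by_cases htM : t ≤ max N M
  · refine lt_of_le_of_ne (hm t (Finset.mem_Icc.2 ⟨by omega, htM⟩)) fun heq => ?_
    exact hst.not_ge (hsmax t ⟨⟨by omega, htM⟩, heq.symm⟩)
  · exact (hm N hNI).trans_lt (hM t (by omega))

namespace WitnessApprox

variable (g : ℕ → ℕ → Bool)

def killTime (c s : ℕ) : ℕ := boundedFind (fun b => !g c b) s

def leastAlive (s n : ℕ) : ℕ :=
  boundedFind (fun a => decide (s < killTime g (Nat.pair n a) s)) s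

/-- `c` dies at stage `max c b₀`, `b₀` its least refutation; testing `max c (killTime g c s) = s`
is equivalent, as `killTime g c s = s + 1` while `c` is alive at `s`. -/
def leastDying (s : ℕ) : ℕ := boundedFind (fun c => decide (max c (killTime g c s) = s)) s

def approxList (s : ℕ) : List ℕ :=
  (List.range (s + 1)).filter fun n => decide (Nat.pair n (leastAlive g s n) < leastDying g s)

variable {g}

theorem lt_killTime_iff {c s : ℕ} : s < killTime g c s ↔ ∀ b ≤ s, g c b = true := by
  refine ⟨fun h b hb => by simpa using eq_false_of_lt_boundedFind (hb.trans_lt h),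
    fun h => not_le.1 fun hle => ?_⟩
  have hspec : (!g c (killTime g c s)) = true := boundedFind_spec hle
  simp [h _ hle] at hspec

theorem killTime_eq {c b s : ℕ} (hb : g c b = false) (hmin : ∀ j < b, g c j = true)
    (hbs : b ≤ s) : killTime g c s = b :=
  boundedFind_eq (by simp [hb]) (fun j hj => by simp [hmin j hj]) hbs

theorem eq_of_max_killTime_eq {c s t : ℕ} (hs : max c (killTime g c s) = s)
    (ht : max c (killTime g c t) = t) : s = t := by
  have hks : killTime g c s ≤ s := (le_max_right _ _).trans hs.le
  have hkt : killTime g c t ≤ t := (le_max_right _ _).trans ht.le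
  rw [← hs, ← ht, killTime, killTime, boundedFind_eq_boundedFind hks hkt]

theorem eventually_max_killTime_ne (c : ℕ) : ∀ᶠ s in atTop, max c (killTime g c s) ≠ s := by
  by_cases h : ∃ s₀, max c (killTime g c s₀) = s₀
  · obtain ⟨s₀, hs₀⟩ := h
    filter_upwards [eventually_gt_atTop s₀] with s hs heq
    exact hs.ne' (eq_of_max_killTime_eq heq hs₀)
  · exact Eventually.of_forall fun s hs => h ⟨s, hs⟩

variable (g) in
theorem tendsto_leastDying : Tendsto (leastDying g) atTop atTop := by
  refine tendsto_atTop.2 fun C => ?_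
  filter_upwards [eventually_ge_atTop C,
    (eventually_all_finset (Finset.range C)).2 fun c _ => eventually_max_killTime_ne (g := g) c]
    with s hCs hne
  by_contra! hlt
  have := boundedFind_spec (hlt.le.trans hCs)
  simp only [decide_eq_true_eq] at this
  exact hne _ (Finset.mem_range.2 hlt) this

theorem mem_approxList {s n : ℕ} :
    n ∈ approxList g s ↔ n ≤ s ∧ Nat.pair n (leastAlive g s n) < leastDying g s := by
  simp [approxList]

theorem eventually_mem_approxList {n a : ℕ} (ha : ∀ b, g (Nat.pair n a) b = true) :
    ∀ᶠ s in atTop, n ∈ approxList g s := by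
  filter_upwards [eventually_ge_atTop n,
    (tendsto_leastDying g).eventually_gt_atTop (Nat.pair n a)] with s hs hdying
  have hlive : leastAlive g s n ≤ a :=
    boundedFind_le (decide_eq_true (lt_killTime_iff.2 fun b _ => ha b))
  have hmono : StrictMono (Nat.pair n) := fun _ _ h => Nat.pair_lt_pair_right n h
  exact mem_approxList.2 ⟨hs, (hmono.monotone hlive).trans_lt hdying⟩

theorem forall_eq_true_of_mem_approxList {s n : ℕ}
    (hs : ∀ t, s < t → leastDying g s < leastDying g t) (hn : n ∈ approxList g s) :
    ∀ b, g (Nat.pair n (leastAlive g s n)) b = true := by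
  set c := Nat.pair n (leastAlive g s n)
  have hc : c < leastDying g s := (mem_approxList.1 hn).2
  have hcs : c ≤ s := Nat.lt_succ_iff.1 (hc.trans_le boundedFind_le_succ)
  have halive : s < killTime g c s :=
    of_decide_eq_true (boundedFind_spec ((Nat.right_le_pair _ _).trans hcs))
  by_contra! hkill
  let b₀ := Nat.find hkill
  have hb₀ : g c b₀ = false := Bool.eq_false_iff.2 (Nat.find_spec hkill)
  have hmin : ∀ j < b₀, g c j = true := fun j hj => by simpa using Nat.find_min hkill hj
  have hsb₀ : s < b₀ := not_le.1 fun hle => by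
    simp [lt_killTime_iff.1 halive _ hle] at hb₀
  have hdies : max c (killTime g c b₀) = b₀ := by
    rw [killTime_eq hb₀ hmin le_rfl]
    exact max_eq_right (hcs.trans hsb₀.le)
  have : leastDying g b₀ ≤ c := boundedFind_le (decide_eq_true hdies)
  exact (hs b₀ hsb₀).not_ge (this.trans hc.le)

theorem computable_approxList (hg : Computable₂ g) : Computable (approxList g) := by
  open Computable in
  have hkill : Computable₂ (killTime g) :=
    Computable₂.boundedFind (Primrec.not.to_comp.comp₂ hg)
  have halive : Computable₂ (leastAlive g) := by
    have hp : Computable₂ fun (sn : ℕ × ℕ) a =>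
        decide (sn.1 < killTime g (Nat.pair sn.2 a) sn.1) :=
      Primrec.nat_lt.decide.to_comp.comp (fst.comp fst)
        (hkill.comp (Primrec₂.natPair.to_comp.comp (snd.comp fst) snd) (fst.comp fst))
    exact (Computable₂.boundedFind hp).comp Computable.id fst
  have hdying : Computable (leastDying g) := by
    have hp : Computable₂ fun s c => decide (max c (killTime g c s) = s) :=
      Primrec.eq.decide.to_comp.comp
        (Primrec.nat_max.to_comp.comp snd (hkill.comp snd fst)) fst
    exact (Computable₂.boundedFind hp).comp Computable.id Computable.id
  have hmem : Computable₂ fun s n => decide (Nat.pair n (leastAlive g s n) < leastDying g s) :=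
    Primrec.nat_lt.decide.to_comp.comp
      (Primrec₂.natPair.to_comp.comp snd (halive.comp fst snd)) (hdying.comp fst)
  exact (Computable₂.filter_range hmem).comp Computable.id succ

end WitnessApprox

theorem Sigma02.exists_computable₂ {P : Set ℕ} (hP : Sigma02 P) :
    ∃ g : ℕ → ℕ → Bool, Computable₂ g ∧ ∀ n, n ∈ P ↔ ∃ a, ∀ b, g (Nat.pair n a) b = true := by
  obtain ⟨R, hR, hPR⟩ := hP
  obtain ⟨f, hf, hfR⟩ := ComputablePred.computable_iff.1 hR
  have hc : Computable fun x : ℕ × ℕ => x.1.unpair := Computable.unpair.comp .fst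
  refine ⟨fun c b => f (c.unpair.1, c.unpair.2, b),
    hf.comp (.pair (Computable.fst.comp hc) (.pair (Computable.snd.comp hc) .snd)), fun n => ?_⟩
  simp only [hPR, Nat.unpair_pair]
  exact exists_congr fun a => forall_congr' fun b => iff_of_eq (congrFun hfR (n, a, b))

/-- If `P ⊆ ℕ` is `Σ⁰₂`, then there is a computable assignment
`i ↦ Y i` of finite sets `Y i ⊆ {0, …, i}` such that every `b ∈ P` belongs to `Y i`
for all but finitely many `i`, and `Y i ⊆ P` for infinitely many `i`. -/
theorem stmt8 (P : Set ℕ) (hP : Sigma02 P) :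
    ∃ Y : ℕ → Finset ℕ, ComputableFinsetFun Y ∧
      (∀ i : ℕ, ∀ x ∈ Y i, x ≤ i) ∧
      (∀ b ∈ P, ∀ᶠ i in atTop, b ∈ Y i) ∧
      (∃ᶠ i in atTop, ↑(Y i) ⊆ P) := by
  obtain ⟨g, hg, hPg⟩ := hP.exists_computable₂
  refine ⟨fun s => (WitnessApprox.approxList g s).toFinset,
    ⟨_, WitnessApprox.computable_approxList hg, fun _ => rfl⟩, fun s n hn => ?_, fun n hn => ?_, ?_⟩
  · exact (WitnessApprox.mem_approxList.1 (List.mem_toFinset.1 hn)).1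
  · obtain ⟨a, ha⟩ := (hPg n).1 hn
    simpa using WitnessApprox.eventually_mem_approxList ha
  · refine (frequently_forall_lt_of_tendsto_atTop (WitnessApprox.tendsto_leastDying g)).mono
      fun s hs n hn => (hPg n).2 ⟨WitnessApprox.leastAlive g s n, ?_⟩
    exact WitnessApprox.forall_eq_true_of_mem_approxList hs (List.mem_toFinset.1 hn)
end

section
/- If P ⊆ ℕ is a Σ⁰₃ set, then there is a uniformly c.e. sequence (Zᵢ)_{i∈ℕ} such that Zᵢ ⊆ {0, …, i} for every i, and: (a) every b ∈ P belongs to Zᵢ for all but finitely many i, and (b) Zᵢ ⊆ P for infinitely many i. -/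
open Filter

/-- A sequence `(Z i)` of subsets of `ℕ` is uniformly c.e. if `{(i, n) : n ∈ Z i}`
is c.e. -/
def UniformlyCE (Z : ℕ → Set ℕ) : Prop :=
  ∃ f : ℕ × ℕ →. ℕ, Partrec f ∧ ∀ p : ℕ × ℕ, p.2 ∈ Z p.1 ↔ (f p).Dom

/-- A set `P ⊆ ℕ` is `Σ⁰₃` if there is a computable relation `R ⊆ ℕ⁴` such that
`n ∈ P ↔ ∃ a ∀ b ∃ c, R n a b c`. -/
def Sigma03 (P : Set ℕ) : Prop :=
  ∃ R : ℕ → ℕ → ℕ → ℕ → Prop,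
    ComputablePred (fun t : ℕ × ℕ × ℕ × ℕ => R t.1 t.2.1 t.2.2.1 t.2.2.2) ∧
    ∀ n : ℕ, n ∈ P ↔ ∃ a : ℕ, ∀ b : ℕ, ∃ c : ℕ, R n a b c

/-!
Write `n ∈ P ↔ ∃ a, G ⟨n, a⟩`, where `G q` is the Π₂ condition that a monotone primitive
recursive counter `f q` is unbounded. At stage `s` we compute the usual tree-of-strategies
guess `σ_s ∈ {0,1}^s` at the outcomes: bit `q` is `1` when `f q` has grown since the last
stage whose guess went through the same node followed by `1`. The true path (bit `q` is
`G q`) is visited infinitely often, and each node to its left only finitely often.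

A number `n` enters `Z i` at a stage `s ≥ i` through a node `ρ⌢1` of `σ_s` with `|ρ| = ⟨n, a⟩`,
provided `ρ⌢1` was visited before `i` and has not been injured since. A node is injured when
the guess passes to its left, or when a proper prefix `ρ'⌢1` receives a fresh visit (the first
visit after the guess was last to its left). For `⟨b, a⟩ ∈ G` the true node `ρ⌢1` of length
`⟨b, a⟩ + 1` is injured only finitely often, so `b` ends up in almost every `Z i`. Conversely, if
`x` is the last fresh visit of a true node `μ⌢1`, every node admitted into `Z x` is comparable with
`μ⌢1` (otherwise `x` injured it or it lies to the left of `μ⌢1`), hence is a prefix of `μ⌢1`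
and has a correct last bit `1`; so `Z x ⊆ P`. Finite `P` are handled by `Z i = P ∩ [0, i]`.
-/

namespace List

variable {α : Type*}

theorem eq_of_append_singleton_prefix {τ l : List α} {a b : α} (ha : τ ++ [a] <+: l)
    (hb : τ ++ [b] <+: l) : a = b := by
  rcases prefix_or_prefix_of_prefix ha hb with h | h <;>
  · have := h.eq_of_length (by simp)
    simp_all

theorem exists_append_singleton_prefix_iff {l : List α} {a : α} {p : List α → Prop} :
    (∃ τ, τ ++ [a] <+: l ∧ p τ) ↔ ∃ q < l.length, l.take q ++ [a] <+: l ∧ p (l.take q) := by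
  constructor
  · rintro ⟨τ, hτ, hp⟩
    have hlen : τ.length < l.length := by simpa using hτ.length_le
    have : l.take τ.length = τ := (prefix_iff_eq_take.1 ((prefix_append _ _).trans hτ)).symm
    exact ⟨τ.length, hlen, by rwa [this], by rwa [this]⟩
  · rintro ⟨q, -, hq, hp⟩
    exact ⟨_, hq, hp⟩

theorem prefix_or_prefix_or_exists_diverge : ∀ l₁ l₂ : List Bool,
    l₁ <+: l₂ ∨ l₂ <+: l₁ ∨ ∃ τ a, τ ++ [a] <+: l₁ ∧ τ ++ [!a] <+: l₂
  | [], _ => Or.inl nil_prefix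
  | _ :: _, [] => Or.inr (Or.inl nil_prefix)
  | x :: l₁, y :: l₂ => by
    by_cases hxy : x = y
    · subst hxy
      rcases prefix_or_prefix_or_exists_diverge l₁ l₂ with h | h | ⟨τ, a, h₁, h₂⟩
      · exact Or.inl (cons_prefix_cons.2 ⟨rfl, h⟩)
      · exact Or.inr (Or.inl (cons_prefix_cons.2 ⟨rfl, h⟩))
      · exact Or.inr (Or.inr ⟨x :: τ, a, cons_prefix_cons.2 ⟨rfl, h₁⟩,
          cons_prefix_cons.2 ⟨rfl, h₂⟩⟩)
    · exact Or.inr (Or.inr ⟨[], x, by simp, by simpa [Bool.eq_not_iff] using hxy⟩)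

end List

section

open Primrec

variable {α β : Type*} [Primcodable α] [Primcodable β]

theorem PrimrecPred.forall_lt' {p : α × ℕ → Prop} {n : α → ℕ} (hn : Primrec n)
    (hp : PrimrecPred p) : PrimrecPred fun a => ∀ x < n a, p (a, x) :=
  ((PrimrecRel.forall_mem_list (R := fun x a => p (a, x)) (hp.comp (snd.pair fst))).comp
    (list_range.comp hn) Primrec.id).of_eq fun _ => by simp

theorem PrimrecPred.exists_lt' {p : α × ℕ → Prop} {n : α → ℕ} (hn : Primrec n)
    (hp : PrimrecPred p) : PrimrecPred fun a => ∃ x < n a, p (a, x) :=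
  ((PrimrecRel.exists_mem_list (R := fun x a => p (a, x)) (hp.comp (snd.pair fst))).comp
    (list_range.comp hn) Primrec.id).of_eq fun _ => by simp

theorem PrimrecPred.imp {p q : α → Prop} (hp : PrimrecPred p) (hq : PrimrecPred q) :
    PrimrecPred fun a => p a → q a :=
  (hp.not.or hq).of_eq fun _ => imp_iff_not_or.symm

theorem Primrec.list_isPrefix [DecidableEq β] : PrimrecRel (@List.IsPrefix β) :=
  (Primrec.eq.comp (list_take.comp (list_length.comp fst) snd) fst).of_eq fun _ => by
    rw [List.prefix_iff_eq_take, eq_comm]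

/-- Kleene normal form: `p a` holds iff a program semi-deciding `p` halts on `a` within `k` steps,
for some `k`. -/
theorem ComputablePred.exists_primrecPred_iff_exists {p : α → Prop} (hp : ComputablePred p) :
    ∃ T : α × ℕ → Prop, PrimrecPred T ∧ ∀ a, p a ↔ ∃ k, T (a, k) := by
  obtain ⟨c, hc⟩ := Nat.Partrec.Code.exists_code.1 hp.to_re
  refine ⟨fun z => (c.evaln z.2 (Encodable.encode z.1)).isSome, Primrec.primrecPred ?_,
    fun a => ?_⟩
  · exact (option_isSome.comp (Nat.Partrec.Code.primrec_evaln.comp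
      ((snd.pair (const c)).pair (Primrec.encode.comp fst)))).of_eq fun _ => by simp
  · have hdom : p a ↔ (c.eval (Encodable.encode a)).Dom := by
      simpa [hc, Encodable.encodek] using ⟨fun h => ⟨h, trivial⟩, fun ⟨h, _⟩ => h⟩
    simp only [hdom, Part.dom_iff_mem, Nat.Partrec.Code.evaln_complete, Option.isSome_iff_exists]
    exact exists_comm

theorem uniformlyCE_of_primrecPred {Z : ℕ → Set ℕ} {S : (ℕ × ℕ) × ℕ → Prop}
    (hS : PrimrecPred S) (hZ : ∀ i n, n ∈ Z i ↔ ∃ s, S ((i, n), s)) : UniformlyCE Z := by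
  classical
  refine ⟨fun p => Nat.rfind (fun s => Part.some (decide (S (p, s))) : ℕ →. Bool),
    Partrec.rfind hS.decide.to_comp.to₂.partrec₂, fun p => ?_⟩
  rw [hZ]
  refine ⟨fun ⟨s, hs⟩ => Nat.rfind_dom.2 ⟨s, by simpa using hs, fun _ => trivial⟩, fun h => ?_⟩
  obtain ⟨s, hs, -⟩ := Nat.rfind_dom.1 h
  exact ⟨s, by simpa using hs⟩

end

def witnessLength (S : ℕ → ℕ → Prop) [DecidableRel S] (s : ℕ) : ℕ :=
  Nat.findGreatest (fun j => ∀ b < j, ∃ m < s, S b m) s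

theorem monotone_witnessLength (S : ℕ → ℕ → Prop) [DecidableRel S] :
    Monotone (witnessLength S) :=
  fun _ _ h => Nat.findGreatest_mono (fun _ hj b hb => (hj b hb).imp fun _ hm =>
    ⟨hm.1.trans_le h, hm.2⟩) h

theorem tendsto_witnessLength_iff {S : ℕ → ℕ → Prop} [DecidableRel S] :
    Tendsto (witnessLength S) atTop atTop ↔ ∀ b, ∃ m, S b m := by
  constructor
  · intro h b
    obtain ⟨s, hs⟩ := (h.eventually_gt_atTop b).exists
    have := Nat.findGreatest_spec (P := fun j => ∀ b < j, ∃ m < s, S b m) (Nat.zero_le s)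
      (fun _ h => absurd h (Nat.not_lt_zero _))
    obtain ⟨m, -, hm⟩ := this b hs
    exact ⟨m, hm⟩
  · intro h
    refine tendsto_atTop.2 fun N => ?_
    have hwit : ∀ᶠ s in atTop, ∀ b ∈ Set.Iio N, ∃ m < s, S b m :=
      (Set.finite_Iio N).eventually_all.2 fun b _ =>
        let ⟨m, hm⟩ := h b
        (eventually_gt_atTop m).mono fun _ hs => ⟨m, hs, hm⟩
    exact ((eventually_ge_atTop N).and hwit).mono fun s ⟨hNs, hs⟩ =>
      Nat.le_findGreatest hNs fun b hb => hs b hb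

theorem primrec_witnessLength {S : ℕ × ℕ × ℕ → Prop} [DecidablePred S] (hS : PrimrecPred S) :
    Primrec₂ fun q s => witnessLength (fun b m => S (q, b, m)) s := by
  open Primrec in
  have hP : PrimrecRel fun (x : ℕ × ℕ) (j : ℕ) => ∀ b < j, ∃ m < x.2, S (x.1, b, m) :=
    PrimrecPred.forall_lt' snd
      (p := fun z : ((ℕ × ℕ) × ℕ) × ℕ => ∃ m < z.1.1.2, S (z.1.1.1, z.2, m))
      (PrimrecPred.exists_lt' (snd.comp (fst.comp fst))
        (p := fun y : (((ℕ × ℕ) × ℕ) × ℕ) × ℕ => S (y.1.1.1.1, y.1.2, y.2))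
        (hS.comp ((fst.comp (fst.comp (fst.comp fst))).pair ((snd.comp fst).pair snd))))
  exact (Primrec.nat_findGreatest Primrec.snd hP).of_eq fun _ => rfl

theorem Sigma03.exists_tendsto_iff {P : Set ℕ} (hP : Sigma03 P) :
    ∃ f : ℕ → ℕ → ℕ, Primrec₂ f ∧ (∀ q, Monotone (f q)) ∧
      ∀ n, n ∈ P ↔ ∃ a, Tendsto (f (Nat.pair n a)) atTop atTop := by
  obtain ⟨R, hR, hPR⟩ := hP
  obtain ⟨T, hT, hRT⟩ := hR.exists_primrecPred_iff_exists
  -- A witness `m` for `S (q, b, ·)` codes a witness `c` for `R` and a halting time `k` for `T`.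
  let S : ℕ × ℕ × ℕ → Prop := fun x =>
    T ((x.1.unpair.1, x.1.unpair.2, x.2.1, x.2.2.unpair.1), x.2.2.unpair.2)
  have hS : PrimrecPred S := by
    open Primrec in
    exact hT.comp (((fst.comp (unpair.comp fst)).pair ((snd.comp (unpair.comp fst)).pair
      ((fst.comp snd).pair (fst.comp (unpair.comp (snd.comp snd)))))).pair
      (snd.comp (unpair.comp (snd.comp snd))))
  have key : ∀ n a b, (∃ c, R n a b c) ↔ ∃ m, S (Nat.pair n a, b, m) := by
    intro n a b
    simp only [S, Nat.unpair_pair]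
    constructor
    · rintro ⟨c, hc⟩
      obtain ⟨k, hk⟩ := (hRT (n, a, b, c)).1 hc
      exact ⟨Nat.pair c k, by simpa using hk⟩
    · rintro ⟨m, hm⟩
      exact ⟨m.unpair.1, (hRT _).2 ⟨m.unpair.2, hm⟩⟩
  classical
  refine ⟨_, primrec_witnessLength hS, fun q => monotone_witnessLength _, fun n => ?_⟩
  simp only [hPR, tendsto_witnessLength_iff, key]

def buildBits (g : ℕ → List Bool → Bool) : ℕ → List Bool
  | 0 => []
  | n + 1 => buildBits g n ++ [g n (buildBits g n)]

theorem length_buildBits (g : ℕ → List Bool → Bool) (n : ℕ) : (buildBits g n).length = n := by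
  induction n with
  | zero => rfl
  | succ n ih => simp [buildBits, ih]

theorem buildBits_prefix (g : ℕ → List Bool → Bool) {m n : ℕ} (h : m ≤ n) :
    buildBits g m <+: buildBits g n := by
  induction h with
  | refl => exact List.prefix_refl _
  | step _ ih => exact ih.trans (List.prefix_append _ _)

theorem append_prefix_buildBits {g : ℕ → List Bool → Bool} {ρ : List Bool} {n : ℕ}
    (hρ : ρ <+: buildBits g n) (hlt : ρ.length < n) : ρ ++ [g ρ.length ρ] <+: buildBits g n := by
  have hm : buildBits g ρ.length = ρ :=
    (List.prefix_of_prefix_length_le (buildBits_prefix g hlt.le) hρ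
      (by rw [length_buildBits])).eq_of_length (by rw [length_buildBits])
  have := buildBits_prefix g (Nat.succ_le_of_lt hlt)
  rwa [buildBits, hm] at this

theorem primrec_buildBits {α : Type*} [Primcodable α] {g : α → ℕ → List Bool → Bool}
    (hg : Primrec fun p : α × ℕ × List Bool => g p.1 p.2.1 p.2.2) :
    Primrec₂ fun a n => buildBits (g a) n := by
  open Primrec in
  refine (nat_rec (const []) (list_concat.comp (snd.comp snd) hg).to₂).of_eq fun a n => ?_
  induction n with
  | zero => rfl
  | succ n ih => simp [buildBits, ih]

namespace GuessTree

section

variable (f : ℕ → ℕ → ℕ)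

/-- The guess at stage `H.length`, given the earlier guesses `H`. -/
def guessAfter (H : List (List Bool)) : List Bool :=
  buildBits (fun q ρ =>
    decide (∀ t < H.length, ρ ++ [true] <+: H.getD t [] → f q t < f q H.length)) H.length

def guesses : ℕ → List (List Bool)
  | 0 => []
  | s + 1 => guesses s ++ [guessAfter f (guesses s)]

def guess (s : ℕ) : List Bool := guessAfter f (guesses f s)

theorem guesses_eq_map (s : ℕ) : guesses f s = (List.range s).map (guess f) := by
  induction s with
  | zero => rfl
  | succ s ih => rw [guesses, List.range_succ, List.map_append, ← ih]; rfl

theorem guess_eq (s : ℕ) : guess f s =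
    buildBits (fun q ρ => decide (∀ t < s, ρ ++ [true] <+: guess f t → f q t < f q s)) s := by
  rw [guess, guessAfter, guesses_eq_map]
  simp +contextual [List.getD_eq_getElem?_getD]

theorem length_guess (s : ℕ) : (guess f s).length = s := by
  rw [guess_eq, length_buildBits]

open scoped Classical in
noncomputable def truePath (k : ℕ) : List Bool :=
  (List.range k).map fun q => decide (Tendsto (f q) atTop atTop)

/-- Outcome `true` lies to the left of `false`. -/
def LeftOf (u : ℕ) (ν : List Bool) : Prop :=
  ∃ ρ, ρ ++ [false] <+: ν ∧ ρ ++ [true] <+: guess f u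

def IsFreshVisit (ν : List Bool) (w : ℕ) : Prop :=
  ν <+: guess f w ∧ ∀ w' < w, ν <+: guess f w' → ∃ u ∈ Set.Icc w' w, LeftOf f u ν

def Injured (ν : List Bool) (u : ℕ) : Prop :=
  LeftOf f u ν ∨
    ∃ ρ, ρ ++ [true] <+: ν ∧ ρ.length + 1 < ν.length ∧ IsFreshVisit f (ρ ++ [true]) u

/-- The level `ρ.length` of the node `ρ ++ [true]` codes a pair `⟨n, a⟩`. -/
def Admits (i n s : ℕ) : Prop :=
  n ≤ i ∧ i ≤ s ∧ ∃ ρ, ρ ++ [true] <+: guess f s ∧ ρ.length.unpair.1 = n ∧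
    ∃ w < i, ρ ++ [true] <+: guess f w ∧ ∀ u ∈ Set.Ioc w s, ¬Injured f (ρ ++ [true]) u

end

section

variable {f : ℕ → ℕ → ℕ}

theorem append_decide_prefix_guess {ρ : List Bool} {s : ℕ} (hρ : ρ <+: guess f s)
    (hlt : ρ.length < s) :
    ρ ++ [decide (∀ t < s, ρ ++ [true] <+: guess f t → f ρ.length t < f ρ.length s)] <+:
      guess f s := by
  rw [guess_eq] at hρ ⊢
  exact append_prefix_buildBits hρ hlt

theorem append_true_prefix_guess_iff {ρ : List Bool} {s : ℕ} (hρ : ρ <+: guess f s)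
    (hlt : ρ.length < s) :
    ρ ++ [true] <+: guess f s ↔ ∀ t < s, ρ ++ [true] <+: guess f t → f ρ.length t < f ρ.length s :=
  ⟨fun h => of_decide_eq_true (List.eq_of_append_singleton_prefix h
    (append_decide_prefix_guess hρ hlt)).symm,
   fun h => by simpa only [decide_eq_true h] using append_decide_prefix_guess hρ hlt⟩

theorem append_false_prefix_guess {ρ : List Bool} {s : ℕ} (hρ : ρ <+: guess f s)
    (hlt : ρ.length < s) (h : ¬ρ ++ [true] <+: guess f s) : ρ ++ [false] <+: guess f s := by
  rw [append_true_prefix_guess_iff hρ hlt] at h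
  simpa [h] using append_decide_prefix_guess hρ hlt

theorem lt_of_append_true_prefix_guess {ρ : List Bool} {t s : ℕ} (hts : t < s)
    (ht : ρ ++ [true] <+: guess f t) (hs : ρ ++ [true] <+: guess f s) :
    f ρ.length t < f ρ.length s := by
  have hlt : ρ.length < s := by simpa [length_guess] using hs.length_le
  exact (append_true_prefix_guess_iff ((List.prefix_append _ _).trans hs) hlt).1 hs t hts ht

theorem tendsto_of_frequently_append_true_prefix_guess {ρ : List Bool}
    (hmono : Monotone (f ρ.length)) (h : ∃ᶠ s in atTop, ρ ++ [true] <+: guess f s) :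
    Tendsto (f ρ.length) atTop atTop := by
  rw [hmono.tendsto_atTop_atTop_iff]
  suffices ∀ N, ∃ s, ρ ++ [true] <+: guess f s ∧ N ≤ f ρ.length s from
    fun N => (this N).imp fun _ => And.right
  intro N
  induction N with
  | zero => exact h.exists.imp fun _ hs => ⟨hs, Nat.zero_le _⟩
  | succ N ih =>
    obtain ⟨s, hs, hN⟩ := ih
    obtain ⟨t, hst, ht⟩ := frequently_atTop.1 h (s + 1)
    exact ⟨t, ht, lt_of_le_of_lt hN (lt_of_append_true_prefix_guess hst hs ht)⟩

theorem eventually_not_append_true_prefix_guess {ρ : List Bool} (hmono : Monotone (f ρ.length))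
    (hρ : ¬Tendsto (f ρ.length) atTop atTop) : ∀ᶠ s in atTop, ¬ρ ++ [true] <+: guess f s :=
  not_frequently.1 (mt (tendsto_of_frequently_append_true_prefix_guess hmono) hρ)

theorem length_truePath (k : ℕ) : (truePath f k).length = k := by
  simp [truePath]

theorem truePath_succ_of_tendsto {k : ℕ} (hk : Tendsto (f k) atTop atTop) :
    truePath f (k + 1) = truePath f k ++ [true] := by
  simp [truePath, List.range_succ, hk]

theorem truePath_succ_of_not_tendsto {k : ℕ} (hk : ¬Tendsto (f k) atTop atTop) :
    truePath f (k + 1) = truePath f k ++ [false] := by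
  simp [truePath, List.range_succ, hk]

theorem eq_truePath_of_prefix {ρ : List Bool} {k : ℕ} (h : ρ <+: truePath f k) :
    ρ = truePath f ρ.length := by
  have hle : ρ.length ≤ k := by simpa [length_truePath] using h.length_le
  rw [List.prefix_iff_eq_take.1 h, truePath, truePath, ← List.map_take, List.take_range,
    min_eq_left hle]
  simp

theorem tendsto_of_append_true_prefix_truePath {ρ : List Bool} {k : ℕ}
    (h : ρ ++ [true] <+: truePath f k) : Tendsto (f ρ.length) atTop atTop := by
  by_contra hρ
  have := eq_truePath_of_prefix h
  rw [List.length_append, List.length_singleton, truePath_succ_of_not_tendsto hρ,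
    ← eq_truePath_of_prefix ((List.prefix_append _ _).trans h)] at this
  simp at this

theorem not_tendsto_of_append_false_prefix_truePath {ρ : List Bool} {k : ℕ}
    (h : ρ ++ [false] <+: truePath f k) : ¬Tendsto (f ρ.length) atTop atTop := by
  intro hρ
  have := eq_truePath_of_prefix h
  rw [List.length_append, List.length_singleton, truePath_succ_of_tendsto hρ,
    ← eq_truePath_of_prefix ((List.prefix_append _ _).trans h)] at this
  simp at this

theorem eventually_not_isFreshVisit {ν : List Bool} (h : ∀ᶠ u in atTop, ¬LeftOf f u ν) :
    ∀ᶠ w in atTop, ¬IsFreshVisit f ν w := by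
  obtain ⟨B, hB⟩ := eventually_atTop.1 h
  by_cases hw : ∃ w₀ ≥ B, IsFreshVisit f ν w₀
  · obtain ⟨w₀, hw₀B, hw₀⟩ := hw
    refine eventually_atTop.2 ⟨w₀ + 1, fun w hw hF => ?_⟩
    obtain ⟨u, ⟨hw₀u, -⟩, hu⟩ := hF.2 w₀ hw hw₀.1
    exact hB u (hw₀B.trans hw₀u) hu
  · push Not at hw
    exact eventually_atTop.2 ⟨B, hw⟩

theorem exists_isFreshVisit_forall_not_leftOf {ν : List Bool}
    (hL : ∀ᶠ u in atTop, ¬LeftOf f u ν) (hV : ∃ᶠ s in atTop, ν <+: guess f s) :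
    ∃ x, IsFreshVisit f ν x ∧ ∀ u ≥ x, ¬LeftOf f u ν := by
  classical
  have hB := eventually_atTop.1 hL
  have hx : ∃ x, Nat.find hB ≤ x ∧ ν <+: guess f x := frequently_atTop.1 hV _
  refine ⟨Nat.find hx, ⟨(Nat.find_spec hx).2, fun w' hw' hv => ?_⟩,
    fun u hu => Nat.find_spec hB u ((Nat.find_spec hx).1.trans hu)⟩
  have hw'B : w' < Nat.find hB := not_le.1 fun h => Nat.find_min hx hw' ⟨h, hv⟩
  obtain ⟨u, hu, hl⟩ : ∃ u ≥ Nat.find hB - 1, LeftOf f u ν := by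
    have := Nat.find_min hB (by omega : Nat.find hB - 1 < Nat.find hB)
    push Not at this
    exact this
  have huB : u < Nat.find hB := not_le.1 fun h => Nat.find_spec hB u h hl
  exact ⟨u, ⟨by omega, huB.le.trans (Nat.find_spec hx).1⟩, hl⟩

theorem prefix_of_admits_of_isFreshVisit {ρ₀ : List Bool} {x n s : ℕ}
    (hx : IsFreshVisit f (ρ₀ ++ [true]) x) (hL : ∀ u ≥ x, ¬LeftOf f u (ρ₀ ++ [true]))
    (h : Admits f x n s) : ∃ ρ, ρ ++ [true] <+: ρ₀ ++ [true] ∧ ρ.length.unpair.1 = n := by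
  obtain ⟨-, hxs, ρ, hρs, hn, w, hwx, hρw, hclear⟩ := h
  refine ⟨ρ, ?_, hn⟩
  have hinj := hclear x ⟨hwx, hxs⟩
  have hnotLeft : ¬LeftOf f x (ρ ++ [true]) := fun h => hinj (Or.inl h)
  have hnotExt : ¬(ρ₀ ++ [true] <+: ρ ++ [true] ∧ ρ₀.length < ρ.length) :=
    fun ⟨h, hlt⟩ => hinj (Or.inr ⟨ρ₀, h, by simpa using hlt, hx⟩)
  rcases List.prefix_or_prefix_or_exists_diverge (ρ ++ [true]) (guess f x) with
    hνx | hxν | ⟨τ, a, hτν, hτx⟩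
  · rcases List.prefix_or_prefix_of_prefix hνx hx.1 with h | h
    · exact h
    · have hlen : ρ.length ≤ ρ₀.length := not_lt.1 fun hlt => hnotExt ⟨h, hlt⟩
      rw [h.eq_of_length (le_antisymm h.length_le (by simpa using hlen))]
  · have := hxν.length_le.trans (by simpa [length_guess] using hρw.length_le)
    rw [length_guess] at this
    omega
  · cases a
    · exact absurd ⟨τ, hτν, hτx⟩ hnotLeft
    · rcases List.prefix_or_prefix_of_prefix hτx hx.1 with h | h
      · exact absurd ⟨τ, h, hτν.trans hρs⟩ (hL s hxs)
      · rcases List.prefix_concat_iff.1 h with h | h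
        · simp at h
        · refine absurd ⟨h.trans ((List.prefix_append _ _).trans hτν), ?_⟩ hnotExt
          have h₁ := h.length_le
          have h₂ := hτν.length_le
          simp only [List.length_append, List.length_singleton] at h₁ h₂
          omega

variable (hmono : ∀ q, Monotone (f q))
include hmono

theorem frequently_truePath_prefix_guess (k : ℕ) :
    ∃ᶠ s in atTop, truePath f k <+: guess f s := by
  induction k with
  | zero => exact Frequently.of_forall fun _ => List.nil_prefix
  | succ k ih =>
    by_cases hk : Tendsto (f k) atTop atTop
    · -- If every visit of `truePath f k ++ [true]` came before `B`, the next visit of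
      -- `truePath f k` at which `f k` exceeds `f k B` would take outcome `true`.
      rw [truePath_succ_of_tendsto hk]
      by_contra hne
      obtain ⟨B, hB⟩ := eventually_atTop.1 (not_frequently.1 hne)
      obtain ⟨s, hs, hBs, hks, hfs⟩ := (ih.and_eventually ((eventually_ge_atTop B).and
        ((eventually_gt_atTop k).and (hk.eventually_gt_atTop (f k B))))).exists
      refine hB s hBs ((append_true_prefix_guess_iff hs (by rwa [length_truePath])).2 ?_)
      intro t _ ht
      have htB : t < B := by_contra fun h => hB t (not_lt.1 h) ht
      rw [length_truePath]
      exact (hmono k htB.le).trans_lt hfs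
    · rw [truePath_succ_of_not_tendsto hk]
      have hfin := eventually_not_append_true_prefix_guess (hmono _)
        (by rwa [length_truePath] : ¬Tendsto (f (truePath f k).length) atTop atTop)
      refine (ih.and_eventually (hfin.and (eventually_gt_atTop k))).mono ?_
      rintro s ⟨hs, hn, hks⟩
      exact append_false_prefix_guess hs (by rwa [length_truePath]) hn

theorem eventually_not_leftOf_truePath (k : ℕ) :
    ∀ᶠ u in atTop, ¬LeftOf f u (truePath f k) := by
  have h : ∀ᶠ u in atTop, ∀ q ∈ Set.Iio k,
      ¬Tendsto (f q) atTop atTop → ¬truePath f q ++ [true] <+: guess f u := by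
    refine (Set.finite_Iio k).eventually_all.2 fun q _ => ?_
    by_cases hq : Tendsto (f q) atTop atTop
    · exact Eventually.of_forall fun _ h => absurd hq h
    · have := eventually_not_append_true_prefix_guess (hmono _)
        (by rwa [length_truePath] : ¬Tendsto (f (truePath f q).length) atTop atTop)
      exact this.mono fun _ h _ => h
  refine h.mono fun u hu ⟨ρ, hρk, hρu⟩ => ?_
  have hρ : ρ = truePath f ρ.length := eq_truePath_of_prefix ((List.prefix_append _ _).trans hρk)
  refine hu ρ.length ?_ (not_tendsto_of_append_false_prefix_truePath hρk) (hρ ▸ hρu)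
  simpa [length_truePath] using hρk.length_le

theorem eventually_not_injured_truePath (k : ℕ) :
    ∀ᶠ u in atTop, ¬Injured f (truePath f k) u := by
  have hF : ∀ᶠ u in atTop, ∀ q ∈ Set.Iio k, ¬IsFreshVisit f (truePath f (q + 1)) u :=
    (Set.finite_Iio k).eventually_all.2 fun q _ =>
      eventually_not_isFreshVisit (eventually_not_leftOf_truePath hmono (q + 1))
  refine ((eventually_not_leftOf_truePath hmono k).and hF).mono ?_
  rintro u ⟨hl, hf⟩ (h | ⟨ρ, hρ, hlen, hfr⟩)
  · exact hl h
  · have := eq_truePath_of_prefix hρ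
    rw [List.length_append, List.length_singleton] at this
    rw [length_truePath] at hlen
    exact hf ρ.length (Set.mem_Iio.2 (by omega)) (this ▸ hfr)

theorem eventually_admits {q : ℕ} (hq : Tendsto (f q) atTop atTop) :
    ∀ᶠ i in atTop, ∃ s, Admits f i q.unpair.1 s := by
  have hinj := eventually_not_injured_truePath hmono (q + 1)
  have hvis := frequently_truePath_prefix_guess hmono (q + 1)
  rw [truePath_succ_of_tendsto hq] at hinj hvis
  obtain ⟨B, hB⟩ := eventually_atTop.1 hinj
  obtain ⟨w, hBw, hw⟩ := frequently_atTop.1 hvis B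
  refine eventually_atTop.2 ⟨max (w + 1) q.unpair.1, fun i hi => ?_⟩
  obtain ⟨s, his, hs⟩ := frequently_atTop.1 hvis i
  refine ⟨s, le_of_max_le_right hi, his, truePath f q, hs, by rw [length_truePath], w,
    Nat.lt_of_succ_le (le_of_max_le_left hi), hw, fun u hu => hB u (hBw.trans hu.1.le)⟩

theorem exists_stage_admitting_only_tendsto {k : ℕ} (hk : Tendsto (f k) atTop atTop) :
    ∃ x, k < x ∧ ∀ n s, Admits f x n s → ∃ q, q.unpair.1 = n ∧ Tendsto (f q) atTop atTop := by
  have hL := eventually_not_leftOf_truePath hmono (k + 1)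
  have hV := frequently_truePath_prefix_guess hmono (k + 1)
  rw [truePath_succ_of_tendsto hk] at hL hV
  obtain ⟨x, hx, hxL⟩ := exists_isFreshVisit_forall_not_leftOf hL hV
  refine ⟨x, by simpa [length_truePath, length_guess] using hx.1.length_le, fun n s h => ?_⟩
  obtain ⟨ρ, hρ, hn⟩ := prefix_of_admits_of_isFreshVisit hx hxL h
  rw [← truePath_succ_of_tendsto hk] at hρ
  exact ⟨ρ.length, hn, tendsto_of_append_true_prefix_truePath hρ⟩

end

section Computability

open Primrec

variable {f : ℕ → ℕ → ℕ} (hf : Primrec₂ f)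
include hf

theorem primrec_guess : Primrec (guess f) := by
  have hbit : Primrec fun p : List (List Bool) × ℕ × List Bool =>
      decide (∀ t < p.1.length, p.2.2 ++ [true] <+: p.1.getD t [] →
        f p.2.1 t < f p.2.1 p.1.length) :=
    PrimrecPred.decide (PrimrecPred.forall_lt' (list_length.comp fst)
      (p := fun z : (List (List Bool) × ℕ × List Bool) × ℕ =>
        z.1.2.2 ++ [true] <+: z.1.1.getD z.2 [] → f z.1.2.1 z.2 < f z.1.2.1 z.1.1.length)
      (PrimrecPred.imp
        (list_isPrefix.comp (list_concat.comp (snd.comp (snd.comp fst)) (const true))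
          ((list_getD []).comp (fst.comp fst) snd))
        (nat_lt.comp (hf.comp (fst.comp (snd.comp fst)) snd)
          (hf.comp (fst.comp (snd.comp fst)) (list_length.comp (fst.comp fst))))))
  have hafter : Primrec (guessAfter f) :=
    ((primrec_buildBits (g := fun H q ρ => decide (∀ t < H.length,
      ρ ++ [true] <+: H.getD t [] → f q t < f q H.length)) hbit).comp Primrec.id
        list_length).of_eq fun _ => rfl
  have hguesses : Primrec (guesses f) :=
    (nat_rec₁ (f := fun _ H => H ++ [guessAfter f H]) []
      (list_concat.comp snd (hafter.comp snd))).of_eq fun s => by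
      induction s with
      | zero => rfl
      | succ s ih => simp [guesses, ih]
  exact (hafter.comp hguesses).of_eq fun _ => rfl

theorem primrecRel_leftOf : PrimrecRel (LeftOf f) := by
  have htake : Primrec fun z : (ℕ × List Bool) × ℕ => z.1.2.take z.2 :=
    list_take.comp snd (snd.comp fst)
  refine (PrimrecPred.exists_lt' (list_length.comp snd) (PrimrecPred.and
    (list_isPrefix.comp (list_concat.comp htake (const false)) (snd.comp fst))
    (list_isPrefix.comp (list_concat.comp htake (const true))
      ((primrec_guess hf).comp (fst.comp fst))))).of_eq fun _ => ?_
  rw [LeftOf, List.exists_append_singleton_prefix_iff]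

theorem primrecRel_isFreshVisit : PrimrecRel (IsFreshVisit f) := by
  refine (PrimrecPred.and (list_isPrefix.comp fst ((primrec_guess hf).comp snd))
    (PrimrecPred.forall_lt' snd (PrimrecPred.imp
      (list_isPrefix.comp (fst.comp fst) ((primrec_guess hf).comp snd))
      (PrimrecPred.exists_lt' (succ.comp (snd.comp fst)) (PrimrecPred.and
        (nat_le.comp (snd.comp fst) snd)
        ((primrecRel_leftOf hf).comp snd (fst.comp (fst.comp fst)))))))).of_eq fun _ => ?_
  simp [IsFreshVisit, and_assoc, and_left_comm]

theorem primrecRel_injured : PrimrecRel (Injured f) := by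
  have htake : Primrec fun z : (List Bool × ℕ) × ℕ => z.1.1.take z.2 :=
    list_take.comp snd (fst.comp fst)
  refine (PrimrecPred.or ((primrecRel_leftOf hf).comp snd fst)
    (PrimrecPred.exists_lt' (list_length.comp fst) (PrimrecPred.and
      (list_isPrefix.comp (list_concat.comp htake (const true)) (fst.comp fst))
      (PrimrecPred.and (nat_lt.comp (succ.comp (list_length.comp htake))
          (list_length.comp (fst.comp fst)))
        ((primrecRel_isFreshVisit hf).comp (list_concat.comp htake (const true))
          (snd.comp fst)))))).of_eq fun _ => ?_
  rw [Injured, List.exists_append_singleton_prefix_iff]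

theorem primrecPred_admits : PrimrecPred fun p : (ℕ × ℕ) × ℕ => Admits f p.1.1 p.1.2 p.2 := by
  have hclear : PrimrecPred fun x : (List Bool × ℕ × ℕ) × ℕ =>
      ∀ u ∈ Set.Ioc x.2 x.1.2.2, ¬Injured f x.1.1 u :=
    (PrimrecPred.forall_lt' (succ.comp (snd.comp (snd.comp fst))) (PrimrecPred.imp
      (nat_lt.comp (snd.comp fst) snd)
      ((primrecRel_injured hf).comp (fst.comp (fst.comp fst)) snd).not)).of_eq fun _ => by
        simp [and_comm]
  have hwait : PrimrecPred fun y : List Bool × ℕ × ℕ =>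
      ∃ w < y.2.1, y.1 <+: guess f w ∧ ∀ u ∈ Set.Ioc w y.2.2, ¬Injured f y.1 u :=
    PrimrecPred.exists_lt' (fst.comp snd) (PrimrecPred.and
      (list_isPrefix.comp (fst.comp fst) ((primrec_guess hf).comp snd)) hclear)
  have htake : Primrec fun z : ((ℕ × ℕ) × ℕ) × ℕ => (guess f z.1.2).take z.2 :=
    list_take.comp snd ((primrec_guess hf).comp (snd.comp fst))
  have hnode : Primrec fun z : ((ℕ × ℕ) × ℕ) × ℕ => (guess f z.1.2).take z.2 ++ [true] :=
    list_concat.comp htake (const true)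
  refine (PrimrecPred.and (nat_le.comp (snd.comp fst) (fst.comp fst))
    (PrimrecPred.and (nat_le.comp (fst.comp fst) snd)
      (PrimrecPred.exists_lt' ((list_length.comp (primrec_guess hf)).comp snd)
        (PrimrecPred.and (list_isPrefix.comp hnode ((primrec_guess hf).comp (snd.comp fst)))
          (PrimrecPred.and
            (Primrec.eq.comp (fst.comp (unpair.comp (list_length.comp htake)))
              (snd.comp (fst.comp fst)))
            (hwait.comp (hnode.pair ((fst.comp (fst.comp fst)).pair (snd.comp fst))))))))).of_eq
    fun _ => ?_
  rw [Admits, List.exists_append_singleton_prefix_iff]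

end Computability

end GuessTree

theorem exists_of_finite {P : Set ℕ} (hP : P.Finite) :
    ∃ Z : ℕ → Set ℕ, UniformlyCE Z ∧ (∀ i : ℕ, ∀ x ∈ Z i, x ≤ i) ∧
      (∀ b ∈ P, ∀ᶠ i in atTop, b ∈ Z i) ∧ (∃ᶠ i in atTop, Z i ⊆ P) := by
  have hmem : PrimrecPred fun n => n ∈ P :=
    ((PrimrecRel.exists_mem_list Primrec.eq).comp (Primrec.const hP.toFinset.toList)
      Primrec.id).of_eq fun n => by simp
  refine ⟨fun i => {n | n ≤ i ∧ n ∈ P},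
    uniformlyCE_of_primrecPred (S := fun p => p.1.2 ≤ p.1.1 ∧ p.1.2 ∈ P)
      ((Primrec.nat_le.comp (Primrec.snd.comp Primrec.fst) (Primrec.fst.comp Primrec.fst)).and
        (hmem.comp (Primrec.snd.comp Primrec.fst))) fun i n => ?_,
    fun i x hx => hx.1, fun b hb => (eventually_ge_atTop b).mono fun i hi => ⟨hi, hb⟩,
    Frequently.of_forall fun i x hx => hx.2⟩
  simp

open GuessTree in
/-- If `P ⊆ ℕ` is `Σ⁰₃`, then there is a uniformly c.e. sequence
`(Z i)` with `Z i ⊆ {0, …, i}` such that every `b ∈ P` belongs to `Z i` for all but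
finitely many `i`, and `Z i ⊆ P` for infinitely many `i`. -/
theorem stmt9 (P : Set ℕ) (hP : Sigma03 P) :
    ∃ Z : ℕ → Set ℕ, UniformlyCE Z ∧
      (∀ i : ℕ, ∀ x ∈ Z i, x ≤ i) ∧
      (∀ b ∈ P, ∀ᶠ i in atTop, b ∈ Z i) ∧
      (∃ᶠ i in atTop, Z i ⊆ P) := by
  rcases P.finite_or_infinite with hfin | hinf
  · exact exists_of_finite hfin
  obtain ⟨f, hf, hmono, hPf⟩ := hP.exists_tendsto_iff
  refine ⟨fun i => {n | ∃ s, Admits f i n s}, uniformlyCE_of_primrecPred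
    (primrecPred_admits hf) fun _ _ => Iff.rfl, fun _ _ ⟨_, hs⟩ => hs.1, fun b hb => ?_, ?_⟩
  · obtain ⟨a, ha⟩ := (hPf b).1 hb
    simpa using eventually_admits hmono ha
  · refine frequently_atTop.2 fun N => ?_
    obtain ⟨b, hb, hNb⟩ := hinf.exists_gt N
    obtain ⟨a, ha⟩ := (hPf b).1 hb
    obtain ⟨x, hx, hadm⟩ := exists_stage_admitting_only_tendsto hmono ha
    refine ⟨x, by have := Nat.left_le_pair b a; omega, fun n ⟨s, hs⟩ => ?_⟩
    obtain ⟨q, rfl, hq⟩ := hadm n s hs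
    exact (hPf _).2 ⟨q.unpair.2, by simpa using hq⟩
end

section
/- For every c.e. set B ⊆ ℕ there is a uniformly c.e. sequence (Bₖ)_{k∈ℕ} of pairwise disjoint sets with ⋃ₖ Bₖ = B such that for every c.e. set W and every k: if W ∖ B is not c.e., then W ∖ Bₖ is not c.e. -/
/-!
Enumerate `B = W c` so that at most one new element enters `B` at each stage, and give each
new element a colour by an injury-free priority construction. Requirement `n`, decoding to
the triple `(e, d, k)`, asks that `W d ≠ W e \ B k`. At stage `s`, the least requirement
`n ≤ s` that has not acted yet and already sees the new element `x` in both `W e` and `W d`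
acts, once and for all: `x` goes into `B k`, so `x ∈ W d \ (W e \ B k)`. Hence if
`W d = W e \ B k`, the requirement never acts, and once the finitely many requirements of
higher priority have stopped acting, no element entering `B` has already been seen in both
`W e` and `W d` at its entry stage. From then on, `x ∈ W e \ B` iff `x` is seen in both
`W e` and `W d` at some stage before it enters `B`, a c.e. condition.
-/

open Nat.Partrec (Code)
open Nat.Partrec.Code

lemma exists_partrec_dom_iff_exists {α : Type*} [Primcodable α] {p : α → ℕ → Prop}
    (hp : PrimrecRel p) : ∃ f : α →. ℕ, Partrec f ∧ ∀ a, (f a).Dom ↔ ∃ s, p a s := by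
  classical
  refine ⟨fun a => Nat.rfind fun s => Part.some (decide (p a s)),
    Partrec.rfind hp.decide.to_comp.partrec₂, fun a => Nat.rfind_dom.trans ?_⟩
  exact ⟨fun ⟨s, hs, _⟩ => ⟨s, by simpa using hs⟩,
    fun ⟨s, hs⟩ => ⟨s, by simpa using hs, fun _ => trivial⟩⟩

lemma ce_setOf_exists {p : ℕ → ℕ → Prop} (hp : PrimrecRel p) : CE {x | ∃ s, p x s} := by
  obtain ⟨f, hf, hdom⟩ := exists_partrec_dom_iff_exists hp
  exact ⟨f, hf, Set.ext fun x => (hdom x).symm⟩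

lemma uniformlyCE_of_primrecRel {Z : ℕ → Set ℕ} {p : ℕ × ℕ → ℕ → Prop} (hp : PrimrecRel p)
    (hZ : ∀ k x, x ∈ Z k ↔ ∃ s, p (k, x) s) : UniformlyCE Z := by
  obtain ⟨f, hf, hdom⟩ := exists_partrec_dom_iff_exists hp
  exact ⟨f, hf, fun q => (hZ q.1 q.2).trans (hdom q).symm⟩

namespace Splitting

def W (c : Code) : Set ℕ := {x | (eval c x).Dom}

lemma ce_iff_exists_code {A : Set ℕ} : CE A ↔ ∃ c : Code, A = W c := by
  constructor
  · rintro ⟨f, hf, rfl⟩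
    obtain ⟨c, rfl⟩ := exists_code.1 (Partrec.nat_iff.1 hf)
    exact ⟨c, rfl⟩
  · rintro ⟨c, rfl⟩
    exact ⟨eval c, Partrec.nat_iff.2 (exists_code.2 ⟨c, rfl⟩), rfl⟩

def HaltsBy (c : Code) (s x : ℕ) : Prop := (evaln s c x).isSome

instance (c : Code) (s x : ℕ) : Decidable (HaltsBy c s x) :=
  inferInstanceAs (Decidable (_ = true))

lemma HaltsBy.mono {c : Code} {s t x : ℕ} (h : HaltsBy c s x) (hst : s ≤ t) :
    HaltsBy c t x := by
  obtain ⟨y, hy⟩ := Option.isSome_iff_exists.1 h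
  exact Option.isSome_iff_exists.2 ⟨y, evaln_mono hst hy⟩

lemma exists_haltsBy_iff {c : Code} {x : ℕ} : (∃ s, HaltsBy c s x) ↔ x ∈ W c := by
  simp only [HaltsBy, Option.isSome_iff_exists, W, Set.mem_ofPred_eq, Part.dom_iff_mem]
  exact ⟨fun ⟨_, y, hy⟩ => ⟨y, evaln_sound hy⟩,
    fun ⟨y, hy⟩ => (evaln_complete.1 hy).imp fun _ hs => ⟨y, hs⟩⟩

lemma primrecPred_haltsBy : PrimrecPred fun q : Code × ℕ × ℕ => HaltsBy q.1 q.2.1 q.2.2 :=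
  Primrec.primrecPred <| (Primrec.option_isSome.comp <| primrec_evaln.comp <|
    ((Primrec.fst.comp .snd).pair .fst).pair (Primrec.snd.comp .snd)).of_eq
      fun _ => Bool.decide_eq_true.symm

section Enumeration

variable (c : Code)

def enum (p : ℕ) : Option ℕ := if HaltsBy c p.unpair.2 p.unpair.1 then some p.unpair.1 else none

lemma exists_enum_eq_some_iff {x : ℕ} : (∃ p, enum c p = some x) ↔ x ∈ W c := by
  rw [← exists_haltsBy_iff]
  constructor
  · rintro ⟨p, hp⟩
    unfold enum at hp
    split_ifs at hp with h
    exact ⟨_, Option.some_injective _ hp ▸ h⟩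
  · rintro ⟨s, hs⟩
    exact ⟨Nat.pair x s, by simp [enum, hs]⟩

def EntersAt (x s : ℕ) : Prop := enum c s = some x ∧ ∀ t < s, enum c t ≠ some x

instance (x s : ℕ) : Decidable (EntersAt c x s) :=
  inferInstanceAs (Decidable (_ ∧ _))

variable {c}

lemma EntersAt.mem {x s : ℕ} (h : EntersAt c x s) : x ∈ W c :=
  (exists_enum_eq_some_iff c).1 ⟨s, h.1⟩

lemma exists_entersAt {x : ℕ} (hx : x ∈ W c) : ∃ s, EntersAt c x s := by
  have hex := (exists_enum_eq_some_iff c).2 hx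
  exact ⟨Nat.find hex, Nat.find_spec hex, fun _ => Nat.find_min hex⟩

lemma EntersAt.unique {x s t : ℕ} (hs : EntersAt c x s) (ht : EntersAt c x t) : s = t := by
  by_contra hne
  rcases Nat.lt_or_gt_of_ne hne with hlt | hlt
  · exact ht.2 s hlt hs.1
  · exact hs.2 t hlt ht.1

end Enumeration

section Construction

def req (n : ℕ) : Code × Code × ℕ := Denumerable.ofNat _ n

def RequiresAttention (n s x : ℕ) : Prop := HaltsBy (req n).1 s x ∧ HaltsBy (req n).2.1 s x

instance (n s x : ℕ) : Decidable (RequiresAttention n s x) :=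
  inferInstanceAs (Decidable (_ ∧ _))

variable (c : Code)

def actor (done : List ℕ) (s : ℕ) : Option ℕ :=
  (enum c s).bind fun x =>
    if EntersAt c x s then (List.range (s + 1)).find? fun n => n ∉ done ∧ RequiresAttention n s x
    else none

def acted : ℕ → List ℕ
  | 0 => []
  | s + 1 => (actor c (acted s) s).elim (acted s) (· :: acted s)

def ActsAt (n s : ℕ) : Prop := actor c (acted c s) s = some n

def colour (s : ℕ) : ℕ := ((actor c (acted c s) s).map fun n => (req n).2.2).getD 0

def piece (k : ℕ) : Set ℕ := {x | ∃ s, EntersAt c x s ∧ colour c s = k}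

variable {c}

lemma actor_spec {done : List ℕ} {s n : ℕ} (h : actor c done s = some n) :
    ∃ x, EntersAt c x s ∧ n ∉ done ∧ RequiresAttention n s x := by
  obtain ⟨x, -, hx⟩ := Option.bind_eq_some_iff.1 h
  split_ifs at hx with hxs
  exact ⟨x, hxs, by simpa using List.find?_some hx⟩

lemma exists_actor_le {done : List ℕ} {s n x : ℕ} (hx : EntersAt c x s) (hns : n ≤ s)
    (hn : n ∉ done) (hr : RequiresAttention n s x) : ∃ m ≤ n, actor c done s = some m := by
  rw [actor, hx.1, Option.bind_some, if_pos hx]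
  cases hfind : (List.range (s + 1)).find? fun n => n ∉ done ∧ RequiresAttention n s x with
  | none =>
    rw [List.find?_range_eq_none] at hfind
    simpa [hn, hr] using hfind n (Nat.lt_succ_of_le hns)
  | some m =>
    rw [List.find?_range_eq_some] at hfind
    refine ⟨m, not_lt.1 fun hnm => ?_, rfl⟩
    simpa [hn, hr] using hfind.2.2 n hnm

lemma mem_acted_iff {n s : ℕ} : n ∈ acted c s ↔ ∃ t < s, ActsAt c n t := by
  induction s with
  | zero => simp [acted]
  | succ s ih =>
    have hsucc : n ∈ acted c (s + 1) ↔ ActsAt c n s ∨ n ∈ acted c s := by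
      rw [acted, ActsAt]
      cases actor c (acted c s) s <;> simp [eq_comm]
    rw [hsucc, ih]
    constructor
    · rintro (h | ⟨t, ht, h⟩)
      exacts [⟨s, s.lt_succ_self, h⟩, ⟨t, ht.trans s.lt_succ_self, h⟩]
    · rintro ⟨t, ht, h⟩
      rcases Nat.lt_succ_iff_lt_or_eq.1 ht with ht | rfl
      exacts [Or.inr ⟨t, ht, h⟩, Or.inl h]

lemma ActsAt.unique {n s t : ℕ} (hs : ActsAt c n s) (ht : ActsAt c n t) : s = t := by
  have not_mem {u} (hu : ActsAt c n u) : n ∉ acted c u := (actor_spec hu).choose_spec.2.1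
  by_contra hne
  rcases Nat.lt_or_gt_of_ne hne with hlt | hlt
  · exact not_mem ht (mem_acted_iff.2 ⟨s, hlt, hs⟩)
  · exact not_mem hs (mem_acted_iff.2 ⟨t, hlt, ht⟩)

lemma finite_setOf_actsAt_le (n : ℕ) : {s | ∃ m ≤ n, ActsAt c m s}.Finite := by
  have : {s | ∃ m ≤ n, ActsAt c m s} = ⋃ m ∈ Set.Iic n, {s | ActsAt c m s} := by
    ext; simp
  rw [this]
  exact (Set.finite_Iic n).biUnion fun m _ =>
    Set.Subsingleton.finite fun _ hs _ ht => ActsAt.unique hs ht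

lemma ActsAt.colour_eq {n s : ℕ} (h : ActsAt c n s) : colour c s = (req n).2.2 := by
  rw [colour, h]
  rfl

lemma piece_subset (k : ℕ) : piece c k ⊆ W c := fun _ ⟨_, hx, _⟩ => hx.mem

lemma pairwise_disjoint_piece : Pairwise fun j k => Disjoint (piece c j) (piece c k) := by
  intro j k hjk
  rw [Set.disjoint_left]
  rintro x ⟨s, hs, rfl⟩ ⟨t, ht, rfl⟩
  exact hjk (by rw [hs.unique ht])

lemma iUnion_piece : ⋃ k, piece c k = W c := by
  refine Set.Subset.antisymm (Set.iUnion_subset piece_subset) fun x hx => ?_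
  obtain ⟨s, hs⟩ := exists_entersAt hx
  exact Set.mem_iUnion.2 ⟨colour c s, s, hs, rfl⟩

end Construction

section Primrec

variable (c : Code)

lemma primrec_enum : Primrec (enum c) :=
  Primrec.ite (primrecPred_haltsBy.comp <| (Primrec.const c).pair <|
      (Primrec.snd.comp .unpair).pair (Primrec.fst.comp .unpair))
    (Primrec.option_some.comp <| Primrec.fst.comp .unpair) (Primrec.const none)

lemma primrecRel_entersAt : PrimrecRel (EntersAt c) := by
  have hne : PrimrecRel fun t x => enum c t ≠ some x :=
    (Primrec.eq.comp ((primrec_enum c).comp .fst) (Primrec.option_some.comp .snd)).not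
  exact (Primrec.eq.comp ((primrec_enum c).comp .snd) (Primrec.option_some.comp .fst)).and
    (hne.forall_lt.comp Primrec.snd Primrec.fst)

lemma primrecPred_requiresAttention :
    PrimrecPred fun q : ℕ × ℕ × ℕ => RequiresAttention q.1 q.2.1 q.2.2 :=
  have hreq : Primrec req := Primrec.ofNat _
  (primrecPred_haltsBy.comp <| (Primrec.fst.comp <| hreq.comp .fst).pair .snd).and
    (primrecPred_haltsBy.comp <|
      (Primrec.fst.comp <| Primrec.snd.comp <| hreq.comp .fst).pair .snd)

lemma primrec_actor : Primrec₂ (actor c) := by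
  have hmem : PrimrecRel fun (l : List ℕ) (n : ℕ) => n ∈ l :=
    Primrec.eq.exists_mem_list.of_eq fun _ _ => by simp
  have heligible : PrimrecRel fun (n : ℕ) (q : List ℕ × ℕ × ℕ) =>
      n ∉ q.1 ∧ RequiresAttention n q.2.1 q.2.2 :=
    (hmem.comp (Primrec.fst.comp .snd) .fst).not.and
      (primrecPred_requiresAttention.comp <| Primrec.fst.pair <| Primrec.snd.comp .snd)
  have hfind : Primrec fun q : List ℕ × ℕ × ℕ =>
      (List.range (q.2.1 + 1)).find? fun n => n ∉ q.1 ∧ RequiresAttention n q.2.1 q.2.2 :=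
    (Primrec.list_head?.comp <| heligible.listFilter.comp
      (Primrec.list_range.comp <| Primrec.succ.comp <| Primrec.fst.comp .snd) .id).of_eq
      fun _ => List.head?_filter
  refine Primrec.option_bind ((primrec_enum c).comp .snd) (Primrec.ite ?_ ?_ (Primrec.const none))
  · exact (primrecRel_entersAt c).comp Primrec.snd (Primrec.snd.comp .fst)
  · exact hfind.comp <| (Primrec.fst.comp .fst).pair <| (Primrec.snd.comp .fst).pair .snd

lemma primrec_acted : Primrec (acted c) := by
  have hstep : Primrec₂ fun (s : ℕ) (l : List ℕ) => (actor c l s).elim l (· :: l) :=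
    (Primrec.option_casesOn ((primrec_actor c).comp .snd .fst) .snd
      (Primrec.list_cons.comp .snd (Primrec.snd.comp .fst)).to₂).of_eq
      fun q => by dsimp only; cases actor c q.2 q.1 <;> rfl
  refine (Primrec.nat_rec₁ [] hstep).of_eq fun s => ?_
  induction s with
  | zero => rfl
  | succ s ih => simp only [acted, ← ih]

lemma primrec_colour : Primrec (colour c) :=
  have hk : Primrec fun n => (req n).2.2 := Primrec.snd.comp <| Primrec.snd.comp <| Primrec.ofNat _
  Primrec.option_getD.comp (Primrec.option_map
      ((primrec_actor c).comp (primrec_acted c) .id) (hk.comp .snd).to₂) (Primrec.const 0)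

lemma uniformlyCE_piece : UniformlyCE (piece c) :=
  uniformlyCE_of_primrecRel (p := fun q s => EntersAt c q.2 s ∧ colour c s = q.1)
    ((primrecRel_entersAt c).comp (Primrec.snd.comp .fst) .snd |>.and <|
      Primrec.eq.comp ((primrec_colour c).comp .snd) (Primrec.fst.comp .fst))
    fun _ _ => Iff.rfl

end Primrec

section Verification

variable {c : Code}

lemma ce_diff_of_eventually_not_haltsBy {e d : Code} {s₀ : ℕ} (hd : W e \ W c ⊆ W d)
    (havoid : ∀ s ≥ s₀, ∀ x, EntersAt c x s → HaltsBy e s x → ¬ HaltsBy d s x) :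
    CE (W e \ W c) := by
  have hset : W e \ W c =
      {x | ∃ s, s₀ ≤ s ∧ (HaltsBy e s x ∧ HaltsBy d s x) ∧ ∀ t < s, ¬ EntersAt c x t} := by
    ext x
    constructor
    · intro hx
      obtain ⟨s₁, h₁⟩ := exists_haltsBy_iff.2 hx.1
      obtain ⟨s₂, h₂⟩ := exists_haltsBy_iff.2 (hd hx)
      refine ⟨max s₀ (max s₁ s₂), le_max_left _ _, ⟨h₁.mono ?_, h₂.mono ?_⟩,
        fun t _ ht => hx.2 ht.mem⟩ <;> omega
    · rintro ⟨s, hs₀, ⟨he, hd'⟩, hfresh⟩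
      refine ⟨exists_haltsBy_iff.1 ⟨s, he⟩, fun hxc => ?_⟩
      obtain ⟨t, ht⟩ := exists_entersAt hxc
      have hst : s ≤ t := not_lt.1 fun hts => hfresh t hts ht
      exact havoid t (hs₀.trans hst) x ht (he.mono hst) (hd'.mono hst)
  have haltsBy_comp (e : Code) : PrimrecRel fun (x s : ℕ) => HaltsBy e s x :=
    primrecPred_haltsBy.comp <| (Primrec.const e).pair <| Primrec.snd.pair .fst
  rw [hset]
  exact ce_setOf_exists <| (Primrec.nat_le.comp (.const s₀) .snd).and <|
    ((haltsBy_comp e).and (haltsBy_comp d)).and <|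
      ((primrecRel_entersAt c).not.swap.forall_lt).comp Primrec.snd Primrec.fst

lemma not_actsAt_encode {e d : Code} {k : ℕ} (hd : W d = W e \ piece c k) (s : ℕ) :
    ¬ ActsAt c (Encodable.encode (e, d, k)) s := by
  intro h
  obtain ⟨x, hx, -, -, hxs⟩ := actor_spec h
  have hreq : req (Encodable.encode (e, d, k)) = (e, d, k) := Denumerable.ofNat_encode _
  have hxd : x ∈ W d := exists_haltsBy_iff.1 ⟨s, by rwa [hreq] at hxs⟩
  rw [hd] at hxd
  exact hxd.2 ⟨s, hx, h.colour_eq.trans (by rw [hreq])⟩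

lemma eventually_not_requiresAttention {n : ℕ} (hn : ∀ s, ¬ ActsAt c n s) :
    ∃ s₀, ∀ s ≥ s₀, ∀ x, EntersAt c x s → ¬ RequiresAttention n s x := by
  obtain ⟨b, hb⟩ := (finite_setOf_actsAt_le (c := c) n).bddAbove
  refine ⟨max n (b + 1), fun s hs x hx hr => ?_⟩
  have hn_acted : n ∉ acted c s := fun h =>
    let ⟨t, _, ht⟩ := mem_acted_iff.1 h
    hn t ht
  obtain ⟨m, hmn, hm⟩ := exists_actor_le hx (le_of_max_le_left hs) hn_acted hr
  have : s ≤ b := hb ⟨m, hmn, hm⟩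
  omega

theorem ce_diff_of_eq_diff_piece {e d : Code} {k : ℕ} (hd : W d = W e \ piece c k) :
    CE (W e \ W c) := by
  obtain ⟨s₀, hs₀⟩ := eventually_not_requiresAttention (not_actsAt_encode hd)
  have hreq : req (Encodable.encode (e, d, k)) = (e, d, k) := Denumerable.ofNat_encode _
  refine ce_diff_of_eventually_not_haltsBy (s₀ := s₀) ?_
    fun s hs x hx he hd' => hs₀ s hs x hx (by rw [RequiresAttention, hreq]; exact ⟨he, hd'⟩)
  rw [hd]
  exact Set.sdiff_subset_sdiff_right (piece_subset k)

end Verification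

end Splitting

/-- For every c.e. set `B` there is a uniformly c.e. sequence
`(B k)` of pairwise disjoint sets with union `B`, such that for every c.e. set `W`
and every `k`: if `W ∖ B` is not c.e., then `W ∖ B k` is not c.e. -/
theorem stmt10 (B : Set ℕ) (hB : CE B) :
    ∃ Bseq : ℕ → Set ℕ, UniformlyCE Bseq ∧
      (∀ j k : ℕ, j ≠ k → Bseq j ∩ Bseq k = ∅) ∧
      (⋃ k : ℕ, Bseq k) = B ∧
      (∀ W : Set ℕ, CE W → ∀ k : ℕ, ¬ CE (W \ B) → ¬ CE (W \ Bseq k)) := by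
  obtain ⟨c, rfl⟩ := Splitting.ce_iff_exists_code.1 hB
  refine ⟨Splitting.piece c, Splitting.uniformlyCE_piece c,
    fun j k hjk => (Splitting.pairwise_disjoint_piece hjk).inter_eq, Splitting.iUnion_piece,
    fun V hV k hVc hVk => hVc ?_⟩
  obtain ⟨e, rfl⟩ := Splitting.ce_iff_exists_code.1 hV
  obtain ⟨d, hd⟩ := Splitting.ce_iff_exists_code.1 hVk
  exact Splitting.ce_diff_of_eq_diff_piece hd.symm
end
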